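/- arXiv:1907.02442 — 6 statements merged into one kernel-verified Lean document; each statement's English description precedes it below -/
import Mathlib

section
/- Let g be a g-function on finite alphabet A. Suppose there is a symbol v ∈ A such that no past in D_g (the set of discontinuity points of g) contains v, and inf_{x̄} g(x̄, v) = ε > 0. Then for every past x̄ and every extension z of x̄ by a finite string, Σ_{a ∈ D_g^n} g_n(z a) ≤ (1-ε)^n, where D_g^n = (A ∖ {v})^{n} ∩ {length-n suffixes of D_g}. -/
open MeasureTheory
open scoped Classical

/-- Pasts are coded by `ℕ → A`, index `i` standing for coordinate `-(i+1)`. -/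
def concatPast {A : Type*} (x : ℕ → A) (w : List A) : ℕ → A :=
  fun j => if h : j < w.length then w.get ⟨w.length - 1 - j, by omega⟩ else x (j - w.length)

/-- `gprod g x w = Π_{i<|w|} g(x̄ w_0^{i-1}, w_i)`. -/
noncomputable def gprod {A : Type*} (g : (ℕ → A) → A → ℝ) (x : ℕ → A) (w : List A) : ℝ :=
  ∏ i : Fin w.length, g (concatPast x (w.take i.val)) (w.get i)

/-- `x̄` is a continuity point of the `g`-function `g`. -/
def ContPt {A : Type*} (g : (ℕ → A) → A → ℝ) (x : ℕ → A) : Prop :=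
  ∀ a : A, ∀ δ : ℝ, 0 < δ → ∃ k : ℕ, ∀ z : ℕ → A, (∀ i < k, z i = x i) → |g z a - g x a| < δ

/-- The set of discontinuity pasts of `g`. -/
def Dg {A : Type*} (g : (ℕ → A) → A → ℝ) : Set (ℕ → A) := {x | ¬ ContPt g x}

/-- The word `x_{-n} … x_{-1}` corresponding to a suffix `w : Fin n → A`. -/
def wordOf {A : Type*} {n : ℕ} (w : Fin n → A) : List A := List.ofFn (fun i => w i.rev)

lemma gprod_eq_range {A : Type*} [Nonempty A] (g : (ℕ → A) → A → ℝ) (z : ℕ → A) (l : List A) :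
    gprod g z l = ∏ i ∈ Finset.range l.length,
      g (concatPast z (l.take i)) (l.getD i (Classical.arbitrary A)) := by
  rw [← Fin.prod_univ_eq_prod_range]
  unfold gprod
  apply Finset.prod_congr rfl
  intro i _
  congr 1
  exact (List.getD_eq_getElem l _ i.isLt).symm

lemma gprod_append_singleton {A : Type*} [Nonempty A] (g : (ℕ → A) → A → ℝ) (z : ℕ → A)
    (l : List A) (a : A) :
    gprod g z (l ++ [a]) = gprod g z l * g (concatPast z l) a := by
  rw [gprod_eq_range, gprod_eq_range]
  have hlen : (l ++ [a]).length = l.length + 1 := by simp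
  rw [hlen, Finset.prod_range_succ]
  congr 1
  · apply Finset.prod_congr rfl
    intro i hi
    rw [Finset.mem_range] at hi
    congr 1
    · rw [List.take_append_of_le_length (le_of_lt hi)]
    · rw [List.getD_eq_getElem _ _ (by rw [hlen]; omega), List.getD_eq_getElem _ _ hi]
      exact List.getElem_append_left hi
  · congr 1
    · rw [List.take_append_of_le_length (le_refl _)]
      simp
    · rw [List.getD_eq_getElem _ _ (by simp)]
      simp

lemma gprod_nonneg {A : Type*} (g : (ℕ → A) → A → ℝ) (hg0 : ∀ x a, 0 ≤ g x a)
    (z : ℕ → A) (l : List A) : 0 ≤ gprod g z l :=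
  Finset.prod_nonneg fun _ _ => hg0 _ _

lemma wordOf_cons {A : Type*} {n : ℕ} (a : A) (w : Fin n → A) :
    wordOf (Fin.cons a w) = wordOf w ++ [a] := by
  unfold wordOf
  rw [List.ofFn_succ']
  simp [Fin.rev_castSucc, List.concat_eq_append]

lemma vfree_sum_bound {A : Type*} [Fintype A] [Nonempty A]
    (g : (ℕ → A) → A → ℝ) (v : A) (ε : ℝ)
    (hgv : ∀ x, ε ≤ g x v)
    (hg0 : ∀ x a, 0 ≤ g x a) (hsum : ∀ x, ∑ a, g x a = 1) :
    ∀ (n : ℕ) (z : ℕ → A),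
      ∑ w : Fin n → A, (if ∀ i, w i ≠ v then gprod g z (wordOf w) else 0) ≤ (1 - ε) ^ n := by
  have hone : ∀ x : ℕ → A, g x v ≤ 1 := by
    intro x
    calc g x v ≤ ∑ a, g x a := Finset.single_le_sum (fun a _ => hg0 x a) (Finset.mem_univ v)
    _ = 1 := hsum x
  have hεle : 0 ≤ 1 - ε := by
    have x : ℕ → A := fun _ => Classical.arbitrary A
    linarith [hgv x, hone x]
  intro n
  induction n with
  | zero =>
    intro z
    have h1 : ∀ w : Fin 0 → A,
        (if ∀ i, w i ≠ v then gprod g z (wordOf w) else 0) = 1 := by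
      intro w
      rw [if_pos (fun i => i.elim0)]
      have hw : wordOf w = [] := rfl
      rw [hw]
      simp [gprod]
    rw [Finset.sum_congr rfl (fun w _ => h1 w), Finset.sum_const, Finset.card_univ]
    simp
  | succ n ih =>
    intro z
    rw [← Equiv.sum_comp (Fin.consEquiv (fun _ : Fin (n+1) => A))]
    rw [Fintype.sum_prod_type]
    have step : ∀ (a : A) (w : Fin n → A),
        (if ∀ i, (Fin.consEquiv (fun _ : Fin (n+1) => A)) (a, w) i ≠ v then
          gprod g z (wordOf ((Fin.consEquiv (fun _ : Fin (n+1) => A)) (a, w))) else 0)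
        = (if ∀ i, w i ≠ v then gprod g z (wordOf w) else 0) *
          (if a ≠ v then g (concatPast z (wordOf w)) a else 0) := by
      intro a w
      have hc : (Fin.consEquiv (fun _ : Fin (n+1) => A)) (a, w)
          = (Fin.cons a w : Fin (n+1) → A) := rfl
      rw [hc]
      have hcond : (∀ i : Fin (n+1), (Fin.cons a w : Fin (n+1) → A) i ≠ v)
          ↔ (a ≠ v ∧ ∀ i, w i ≠ v) := by
        constructor
        · intro h
          exact ⟨h 0, fun i => h i.succ⟩
        · rintro ⟨h0, h1⟩ i
          refine Fin.cases ?_ ?_ i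
          · exact h0
          · exact fun j => h1 j
      by_cases hw : ∀ i, w i ≠ v
      · by_cases ha : a ≠ v
        · rw [if_pos (hcond.mpr ⟨ha, hw⟩), if_pos hw, if_pos ha, wordOf_cons,
            gprod_append_singleton]
        · rw [if_neg (fun h => ha (hcond.mp h).1), if_neg ha, mul_zero]
      · rw [if_neg (fun h => hw (hcond.mp h).2), if_neg hw, zero_mul]
    calc ∑ a : A, ∑ w : Fin n → A,
          (if ∀ i, (Fin.consEquiv (fun _ : Fin (n+1) => A)) (a, w) i ≠ v then
            gprod g z (wordOf ((Fin.consEquiv (fun _ : Fin (n+1) => A)) (a, w))) else 0)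
        = ∑ w : Fin n → A, (if ∀ i, w i ≠ v then gprod g z (wordOf w) else 0) *
            (∑ a : A, if a ≠ v then g (concatPast z (wordOf w)) a else 0) := by
          rw [Finset.sum_comm]
          apply Finset.sum_congr rfl
          intro w _
          rw [Finset.mul_sum]
          apply Finset.sum_congr rfl
          intro a _
          exact step a w
      _ ≤ ∑ w : Fin n → A, (if ∀ i, w i ≠ v then gprod g z (wordOf w) else 0) * (1 - ε) := by
          apply Finset.sum_le_sum
          intro w _
          have hnn : 0 ≤ (if ∀ i, w i ≠ v then gprod g z (wordOf w) else 0) := by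
            split_ifs
            · exact gprod_nonneg g hg0 z _
            · exact le_refl 0
          apply mul_le_mul_of_nonneg_left _ hnn
          · have : (∑ a : A, if a ≠ v then g (concatPast z (wordOf w)) a else 0)
                = (∑ a : A, g (concatPast z (wordOf w)) a) - g (concatPast z (wordOf w)) v := by
              rw [← Finset.sum_filter, Finset.filter_ne', Finset.sum_erase_eq_sub (Finset.mem_univ v)]
            rw [this, hsum]
            linarith [hgv (concatPast z (wordOf w))]
      _ = (∑ w : Fin n → A, (if ∀ i, w i ≠ v then gprod g z (wordOf w) else 0)) * (1 - ε) := by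
          rw [← Finset.sum_mul]
      _ ≤ (1 - ε) ^ n * (1 - ε) := by
          apply mul_le_mul_of_nonneg_right (ih z) hεle
      _ = (1 - ε) ^ (n + 1) := by ring

/-- If the discontinuity set of `g` is `v`-free for a symbol `v` and
`inf_x g(x̄, v) = ε > 0`, then for every past `z` (in particular every finite
extension of any past) the sum of `g_n` over the length-`n` suffixes of `D_g` is at
most `(1-ε)^n`. -/
theorem vfree_suffix_sum_bound
    {A : Type*} [Fintype A] [Nonempty A]
    (g : (ℕ → A) → A → ℝ) (v : A) (ε : ℝ) (hε : 0 < ε)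
    (hgv : ∀ x, ε ≤ g x v)
    (hg0 : ∀ x a, 0 ≤ g x a) (hsum : ∀ x, ∑ a, g x a = 1)
    (hfree : ∀ x ∈ Dg g, ∀ i : ℕ, x i ≠ v) :
    ∀ (z : ℕ → A) (n : ℕ), 1 ≤ n →
      ∑ w ∈ Finset.univ.filter
          (fun w : Fin n → A => ∃ x ∈ Dg g, ∀ i : Fin n, x i = w i),
        gprod g z (wordOf w) ≤ (1 - ε) ^ n := by
  intro z n _
  calc ∑ w ∈ Finset.univ.filter
          (fun w : Fin n → A => ∃ x ∈ Dg g, ∀ i : Fin n, x i = w i),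
        gprod g z (wordOf w)
      ≤ ∑ w ∈ Finset.univ.filter (fun w : Fin n → A => ∀ i, w i ≠ v),
        gprod g z (wordOf w) := by
        apply Finset.sum_le_sum_of_subset_of_nonneg
        · intro w hw
          rw [Finset.mem_filter] at hw ⊢
          obtain ⟨_, x, hx, hxw⟩ := hw
          exact ⟨Finset.mem_univ _, fun i => (hxw i) ▸ hfree x hx i⟩
        · intro w _ _
          exact gprod_nonneg g hg0 z _
    _ = ∑ w : Fin n → A, (if ∀ i, w i ≠ v then gprod g z (wordOf w) else 0) := by
        rw [Finset.sum_filter]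
    _ ≤ (1 - ε) ^ n := vfree_sum_bound g v ε hgv hg0 hsum n z
end

section
/- Let A = {−1,+1}, ε ∈ (0,1), and let ν be the image of the Bernoulli(ε on −1) product measure μ under F(x)_i = x_{i-1} x_i. Fix a one-sided configuration y = (…, y_{-1}, y_0) with y_0 = +1, and let x^+ be the F-preimage of y with x_0 = +1. Let S_n be the number of +1's among x^+_{-1},…,x^+_{-n-1}. Then with ρ = ε/(1−ε), the conditional probability satisfies ν(y_0 | y_{-n}^{-1}) = (1−ε) · (ρ + ρ^{2(n+1)(1/2 − S_n/(n+1))}) / (1 + ρ^{2(n+1)(1/2 − S_n/(n+1))}). -/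
open MeasureTheory

/-- The alphabet `{−1,+1}` is realized as `ℤˣ`, with the discrete σ-algebra. -/
instance : MeasurableSpace ℤˣ := ⊤

/-- The pair-product map `F(x)_i = x_{i-1} · x_i`. -/
def pairProd (x : ℤ → ℤˣ) : ℤ → ℤˣ := fun i => x (i - 1) * x i

/-- `xplus y k = x⁺_{-k} = Π_{j=0}^{k-1} y_{-j}`: the `F`-preimage of `y` with
`x⁺_0 = +1`, evaluated at coordinate `-k`. -/
def xplus (y : ℤ → ℤˣ) (k : ℕ) : ℤˣ := ∏ j ∈ Finset.range k, y (-(j : ℤ))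

/-- `Sn y n`: the number of `+1`'s among `x⁺_{-1}, …, x⁺_{-(n+1)}`. -/
def Sn (y : ℤ → ℤˣ) (n : ℕ) : ℕ :=
  ((Finset.Icc 1 (n + 1)).filter (fun k => xplus y k = 1)).card

/-- Cylinder in `(ℤˣ)^ℤ` fixing the coordinates of `y` on the window `[a, b]`. -/
def cylIcc (a b : ℤ) (y : ℤ → ℤˣ) : Set (ℤ → ℤˣ) :=
  {z | ∀ i : ℤ, a ≤ i → i ≤ b → z i = y i}

lemma units_sq (u : ℤˣ) : u * u = 1 := by
  rcases Int.units_eq_one_or u with h | h <;> simp [h]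

lemma meas_all (s : Set ℤˣ) : MeasurableSet s := trivial

lemma meas_eval (i : ℤ) (u : ℤˣ) : MeasurableSet {x : ℤ → ℤˣ | x i = u} := by
  have : {x : ℤ → ℤˣ | x i = u} = (fun x : ℤ → ℤˣ => x i) ⁻¹' {u} := rfl
  rw [this]; exact measurable_pi_apply i (meas_all {u})

lemma measurable_pairProd : Measurable pairProd := by
  apply measurable_pi_lambda
  intro i
  apply measurable_to_countable'
  intro u
  show MeasurableSet ((fun x : ℤ → ℤˣ => x (i - 1) * x i) ⁻¹' {u})
  have : (fun x : ℤ → ℤˣ => x (i - 1) * x i) ⁻¹' {u}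
      = ({x : ℤ → ℤˣ | x (i-1) = 1} ∩ {x | x i = u}) ∪
        ({x : ℤ → ℤˣ | x (i-1) = -1} ∩ {x | x i = -u}) := by
    ext x
    rcases Int.units_eq_one_or (x (i-1)) with h | h <;>
      simp [Set.mem_preimage, h, neg_eq_iff_eq_neg]
  rw [this]
  exact ((meas_eval _ _).inter (meas_eval _ _)).union ((meas_eval _ _).inter (meas_eval _ _))

lemma measurableSet_cylIcc (a b : ℤ) (y : ℤ → ℤˣ) : MeasurableSet (cylIcc a b y) := by
  have : cylIcc a b y = ⋂ i : ℤ, {x : ℤ → ℤˣ | a ≤ i → i ≤ b → x i = y i} := by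
    ext x; simp [cylIcc, Set.mem_iInter]
  rw [this]
  apply MeasurableSet.iInter
  intro i
  by_cases h : a ≤ i ∧ i ≤ b
  · have : {x : ℤ → ℤˣ | a ≤ i → i ≤ b → x i = y i} = {x | x i = y i} := by
      ext x; simp [h.1, h.2]
    rw [this]; exact meas_eval _ _
  · have : {x : ℤ → ℤˣ | a ≤ i → i ≤ b → x i = y i} = Set.univ := by
      ext x; simp only [Set.mem_setOf_eq, Set.mem_univ, iff_true]
      intro h1 h2; exact absurd ⟨h1, h2⟩ h
    rw [this]; exact MeasurableSet.univ

lemma measurableSet_finCyl (s : Finset ℤ) (w : ℤ → ℤˣ) :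
    MeasurableSet {x : ℤ → ℤˣ | ∀ i ∈ s, x i = w i} := by
  have : {x : ℤ → ℤˣ | ∀ i ∈ s, x i = w i} = ⋂ i ∈ (s : Set ℤ), {x : ℤ → ℤˣ | x i = w i} := by
    ext x; simp
  rw [this]
  exact MeasurableSet.biInter (s.countable_toSet) (fun i _ => meas_eval _ _)

lemma xplus_succ (y : ℤ → ℤˣ) (k : ℕ) : xplus y (k+1) = xplus y k * y (-(k:ℤ)) :=
  Finset.prod_range_succ _ _

lemma mul_helper (c u v : ℤˣ) : (c * (u * v)) * (c * u) = v := by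
  have h : (c * (u * v)) * (c * u) = (c * c) * ((u * u) * v) := by ac_rfl
  rw [h, units_sq, units_sq, one_mul, one_mul]

lemma mem_pre (y : ℤ → ℤˣ) (n a : ℕ) (ha : a ≤ n + 1) (x : ℤ → ℤˣ) :
    x ∈ pairProd ⁻¹' cylIcc (-(n:ℤ)) (-(a:ℤ)) y ↔
      (∀ k : ℕ, a ≤ k → k ≤ n+1 →
        x (-(k:ℤ)) = x (-(a:ℤ)) * (xplus y a)⁻¹ * xplus y k) := by
  constructor
  · intro h
    have h' : ∀ k : ℕ, a ≤ k → k ≤ n → x (-(k:ℤ) - 1) * x (-(k:ℤ)) = y (-(k:ℤ)) := by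
      intro k h1 h2
      exact h (-(k:ℤ)) (by omega) (by omega)
    intro k hak
    induction k, hak using Nat.le_induction with
    | base => intro _; simp [mul_assoc]
    | succ k hak ih =>
      intro hk1
      have ex : x (-(k:ℤ)) = x (-(a:ℤ)) * (xplus y a)⁻¹ * xplus y k := ih (by omega)
      have e1 := h' k hak (by omega)
      have hcast : -((k+1:ℕ):ℤ) = -(k:ℤ) - 1 := by push_cast; ring
      rw [hcast]
      have e2 : x (-(k:ℤ) - 1) = y (-(k:ℤ)) * x (-(k:ℤ)) := by
        have := congrArg (· * x (-(k:ℤ))) e1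
        simpa [mul_assoc, units_sq] using this
      rw [e2, ex, xplus_succ]
      ac_rfl
  · intro h i h1 h2
    set k : ℕ := (-i).toNat with hkdef
    have hik : i = -(k:ℤ) := by omega
    have hak : a ≤ k := by omega
    have hkn : k ≤ n := by omega
    have e0 : x i = x (-(a:ℤ)) * (xplus y a)⁻¹ * xplus y k := by
      rw [hik]; exact h k hak (by omega)
    have e1 : x (i - 1) = x (-(a:ℤ)) * (xplus y a)⁻¹ * xplus y (k+1) := by
      have : i - 1 = -((k+1:ℕ):ℤ) := by omega
      rw [this]; exact h (k+1) (by omega) (by omega)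
    show x (i-1) * x i = y i
    rw [e0, e1, xplus_succ, hik]
    have := mul_helper (x (-(a:ℤ)) * (xplus y a)⁻¹) (xplus y k) (y (-(k:ℤ)))
    calc (x (-(a:ℤ)) * (xplus y a)⁻¹ * (xplus y k * y (-(k:ℤ)))) *
          (x (-(a:ℤ)) * (xplus y a)⁻¹ * xplus y k) = y (-(k:ℤ)) := this

def sFin (n a : ℕ) : Finset ℤ := (Finset.Icc a (n+1)).image (fun k : ℕ => -(k:ℤ))

def wFun (y : ℤ → ℤˣ) (c : ℤˣ) (i : ℤ) : ℤˣ := c * xplus y i.natAbs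

lemma pre_eq (y : ℤ → ℤˣ) (n a : ℕ) (ha : a ≤ n + 1) :
    pairProd ⁻¹' cylIcc (-(n:ℤ)) (-(a:ℤ)) y =
      {x | ∀ i ∈ sFin n a, x i = wFun y 1 i} ∪ {x | ∀ i ∈ sFin n a, x i = wFun y (-1) i} := by
  ext x
  rw [Set.mem_preimage, ← Set.mem_preimage, mem_pre y n a ha x]
  have hmem : ∀ (c : ℤˣ), (∀ i ∈ sFin n a, x i = wFun y c i) ↔
      (∀ k : ℕ, a ≤ k → k ≤ n+1 → x (-(k:ℤ)) = c * xplus y k) := by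
    intro c
    constructor
    · intro h k h1 h2
      have := h (-(k:ℤ)) (by
        simp only [sFin, Finset.mem_image]
        exact ⟨k, Finset.mem_Icc.2 ⟨h1, h2⟩, rfl⟩)
      simpa [wFun] using this
    · intro h i hi
      obtain ⟨k, hk, rfl⟩ := Finset.mem_image.1 hi
      rw [Finset.mem_Icc] at hk
      simpa [wFun] using h k hk.1 hk.2
  constructor
  · intro h
    have hxa : x (-(a:ℤ)) = x (-(a:ℤ)) * (xplus y a)⁻¹ * xplus y a := by simp [mul_assoc]
    rcases Int.units_eq_one_or (x (-(a:ℤ)) * (xplus y a)⁻¹) with hc | hc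
    · left; rw [Set.mem_setOf_eq, hmem 1]; intro k h1 h2; rw [h k h1 h2, hc]
    · right; rw [Set.mem_setOf_eq, hmem (-1)]; intro k h1 h2; rw [h k h1 h2, hc]
  · intro h
    rcases h with h | h
    on_goal 1 => rw [Set.mem_setOf_eq, hmem 1] at h
    on_goal 2 => rw [Set.mem_setOf_eq, hmem (-1)] at h
    all_goals {
      intro k h1 h2
      rw [h k h1 h2, h a le_rfl ha]
      simp [mul_assoc] }

lemma one_ne_neg_one : (1 : ℤˣ) ≠ -1 := by decide

lemma measure_piece (ε : ℝ)
    (μ : Measure (ℤ → ℤˣ))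
    (hμ : ∀ (s : Finset ℤ) (w : ℤ → ℤˣ),
      μ {x | ∀ i ∈ s, x i = w i}
        = ∏ i ∈ s, ENNReal.ofReal (if w i = -1 then ε else 1 - ε))
    (y : ℤ → ℤˣ) (n a : ℕ) (c : ℤˣ) :
    μ {x | ∀ i ∈ sFin n a, x i = wFun y c i}
      = ∏ k ∈ Finset.Icc a (n+1), ENNReal.ofReal (if c * xplus y k = -1 then ε else 1 - ε) := by
  rw [hμ, sFin, Finset.prod_image]
  · apply Finset.prod_congr rfl
    intro k _
    simp [wFun]
  · intro k _ l _ h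
    have h' : -(k:ℤ) = -(l:ℤ) := h
    omega

lemma prod_pow (ε : ℝ) (t : Finset ℕ) (f : ℕ → ℤˣ) :
    ∏ k ∈ t, ENNReal.ofReal (if f k = -1 then ε else 1 - ε)
      = ENNReal.ofReal ε ^ (t.filter (fun k => ¬ f k = 1)).card *
        ENNReal.ofReal (1-ε) ^ (t.filter (fun k => f k = 1)).card := by
  rw [← Finset.prod_filter_mul_prod_filter_not t (fun k => f k = 1), mul_comm]
  congr 1
  · rw [← Finset.prod_const]
    apply Finset.prod_congr rfl
    intro k hk
    rcases Int.units_eq_one_or (f k) with h | h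
    · exact absurd h (Finset.mem_filter.1 hk).2
    · simp [h]
  · rw [← Finset.prod_const]
    apply Finset.prod_congr rfl
    intro k hk
    have h := (Finset.mem_filter.1 hk).2
    have h' : ¬ (f k = -1) := by rw [h]; exact one_ne_neg_one
    simp [h']

lemma measure_pre (ε : ℝ)
    (μ : Measure (ℤ → ℤˣ))
    (hμ : ∀ (s : Finset ℤ) (w : ℤ → ℤˣ),
      μ {x | ∀ i ∈ s, x i = w i}
        = ∏ i ∈ s, ENNReal.ofReal (if w i = -1 then ε else 1 - ε))
    (y : ℤ → ℤˣ) (n a : ℕ) (ha : a ≤ n + 1) :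
    (μ.map pairProd) (cylIcc (-(n:ℤ)) (-(a:ℤ)) y) =
      ENNReal.ofReal ε ^ ((Finset.Icc a (n+1)).filter (fun k => ¬ xplus y k = 1)).card *
        ENNReal.ofReal (1-ε) ^ ((Finset.Icc a (n+1)).filter (fun k => xplus y k = 1)).card
      + ENNReal.ofReal ε ^ ((Finset.Icc a (n+1)).filter (fun k => xplus y k = 1)).card *
        ENNReal.ofReal (1-ε) ^ ((Finset.Icc a (n+1)).filter (fun k => ¬ xplus y k = 1)).card := by
  rw [Measure.map_apply measurable_pairProd (measurableSet_cylIcc _ _ _), pre_eq y n a ha]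
  have hdisj : Disjoint {x : ℤ → ℤˣ | ∀ i ∈ sFin n a, x i = wFun y 1 i}
      {x : ℤ → ℤˣ | ∀ i ∈ sFin n a, x i = wFun y (-1) i} := by
    rw [Set.disjoint_left]
    intro x h1 h2
    have hi : (-(((n+1):ℕ):ℤ)) ∈ sFin n a :=
      Finset.mem_image.2 ⟨n+1, Finset.mem_Icc.2 ⟨ha, le_rfl⟩, rfl⟩
    have e1 := h1 _ hi
    have e2 := h2 _ hi
    rw [e1] at e2
    simp only [wFun, one_mul, neg_mul] at e2
    rcases Int.units_eq_one_or (xplus y ((-(((n+1):ℕ):ℤ)).natAbs)) with h | h <;>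
      rw [h] at e2 <;> revert e2 <;> decide
  rw [measure_union hdisj (measurableSet_finCyl _ _),
    measure_piece ε μ hμ y n a 1, measure_piece ε μ hμ y n a (-1),
    prod_pow, prod_pow]
  have c1 : ((Finset.Icc a (n+1)).filter (fun k => ¬ (1:ℤˣ) * xplus y k = 1)).card
      = ((Finset.Icc a (n+1)).filter (fun k => ¬ xplus y k = 1)).card := by
    refine congrArg Finset.card (Finset.filter_congr ?_); intro k _; simp
  have c2 : ((Finset.Icc a (n+1)).filter (fun k => (1:ℤˣ) * xplus y k = 1)).card
      = ((Finset.Icc a (n+1)).filter (fun k => xplus y k = 1)).card := by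
    refine congrArg Finset.card (Finset.filter_congr ?_); intro k _; simp
  have c3 : ((Finset.Icc a (n+1)).filter (fun k => ¬ (-1:ℤˣ) * xplus y k = 1)).card
      = ((Finset.Icc a (n+1)).filter (fun k => xplus y k = 1)).card := by
    refine congrArg Finset.card (Finset.filter_congr ?_); intro k _
    rcases Int.units_eq_one_or (xplus y k) with h | h <;> simp [h]
  have c4 : ((Finset.Icc a (n+1)).filter (fun k => (-1:ℤˣ) * xplus y k = 1)).card
      = ((Finset.Icc a (n+1)).filter (fun k => ¬ xplus y k = 1)).card := by
    refine congrArg Finset.card (Finset.filter_congr ?_); intro k _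
    rcases Int.units_eq_one_or (xplus y k) with h | h <;> simp [h]
  rw [c1, c2, c3, c4]

lemma icc0_insert (n : ℕ) : Finset.Icc 0 (n+1) = insert 0 (Finset.Icc 1 (n+1)) := by
  ext k
  simp only [Finset.mem_Icc, Finset.mem_insert]
  omega

lemma card0 (n : ℕ) (p : ℕ → Prop) [DecidablePred p] (hp : p 0) :
    ((Finset.Icc 0 (n+1)).filter p).card = ((Finset.Icc 1 (n+1)).filter p).card + 1 := by
  rw [icc0_insert, Finset.filter_insert, if_pos hp,
    Finset.card_insert_of_notMem (by simp)]

lemma card0' (n : ℕ) (p : ℕ → Prop) [DecidablePred p] (hp : ¬ p 0) :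
    ((Finset.Icc 0 (n+1)).filter p).card = ((Finset.Icc 1 (n+1)).filter p).card := by
  rw [icc0_insert, Finset.filter_insert, if_neg hp]

lemma xplus_zero (y : ℤ → ℤˣ) : xplus y 0 = 1 := Finset.prod_range_zero _

/-- Explicit formula for the conditional probabilities of Furstenberg's example:
with `ρ = ε/(1−ε)`,
`ν(y_0 | y_{-n}^{-1}) = (1−ε)(ρ + ρ^{2(n+1)(1/2 − S_n/(n+1))})/(1 + ρ^{2(n+1)(1/2 − S_n/(n+1))})`. -/
theorem furstenberg_conditional_formula
    (ε : ℝ) (hε0 : 0 < ε) (hε1 : ε < 1)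
    (μ : Measure (ℤ → ℤˣ)) [IsProbabilityMeasure μ]
    (hμ : ∀ (s : Finset ℤ) (w : ℤ → ℤˣ),
      μ {x | ∀ i ∈ s, x i = w i}
        = ∏ i ∈ s, ENNReal.ofReal (if w i = -1 then ε else 1 - ε))
    (y : ℤ → ℤˣ) (hy : y 0 = 1) (n : ℕ) :
    ((μ.map pairProd) (cylIcc (-(n : ℤ)) 0 y)).toReal
        / ((μ.map pairProd) (cylIcc (-(n : ℤ)) (-1) y)).toReal
      = (1 - ε) *
        (ε / (1 - ε) + (ε / (1 - ε)) ^ (2 * ((n : ℝ) + 1) * (1 / 2 - (Sn y n : ℝ) / ((n : ℝ) + 1))))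
        / (1 + (ε / (1 - ε)) ^ (2 * ((n : ℝ) + 1) * (1 / 2 - (Sn y n : ℝ) / ((n : ℝ) + 1)))) := by
  have h1ε : 0 < 1 - ε := by linarith
  set S := Sn y n with hSdef
  set A := ((Finset.Icc 1 (n+1)).filter (fun k => ¬ xplus y k = 1)).card with hAdef
  have hSfilter : ((Finset.Icc 1 (n+1)).filter (fun k => xplus y k = 1)).card = S := rfl
  have hSA : S + A = n + 1 := by
    have h := Finset.card_filter_add_card_filter_not
      (s := Finset.Icc 1 (n+1)) (p := fun k => xplus y k = 1)
    rw [Nat.card_Icc] at h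
    rw [hSdef, hAdef]
    simpa [Sn] using h
  have hbot := measure_pre ε μ hμ y n 1 (by omega)
  have htop := measure_pre ε μ hμ y n 0 (by omega)
  simp only [Nat.cast_zero, neg_zero, Nat.cast_one] at htop hbot
  rw [← hAdef, hSfilter] at hbot
  have cA0 : ((Finset.Icc 0 (n+1)).filter (fun k => ¬ xplus y k = 1)).card = A := by
    rw [card0' n _ (by simp [xplus_zero]), ← hAdef]
  have cS0 : ((Finset.Icc 0 (n+1)).filter (fun k => xplus y k = 1)).card = S + 1 := by
    rw [card0 n _ (xplus_zero y), hSfilter]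
  rw [cA0, cS0] at htop
  have toR : ∀ u v u' v' : ℕ,
      (ENNReal.ofReal ε ^ u * ENNReal.ofReal (1-ε) ^ v
        + ENNReal.ofReal ε ^ u' * ENNReal.ofReal (1-ε) ^ v').toReal
      = ε^u * (1-ε)^v + ε^u' * (1-ε)^v' := by
    intro u v u' v'
    rw [ENNReal.toReal_add
      (ENNReal.mul_ne_top (ENNReal.pow_ne_top ENNReal.ofReal_ne_top)
        (ENNReal.pow_ne_top ENNReal.ofReal_ne_top))
      (ENNReal.mul_ne_top (ENNReal.pow_ne_top ENNReal.ofReal_ne_top)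
        (ENNReal.pow_ne_top ENNReal.ofReal_ne_top)),
      ENNReal.toReal_mul, ENNReal.toReal_mul, ENNReal.toReal_pow, ENNReal.toReal_pow,
      ENNReal.toReal_pow, ENNReal.toReal_pow, ENNReal.toReal_ofReal hε0.le,
      ENNReal.toReal_ofReal h1ε.le]
  rw [htop, hbot, toR, toR]
  have hcastA : (A:ℝ) = (n:ℝ) + 1 - (S:ℝ) := by
    have : (S:ℝ) + (A:ℝ) = (n:ℝ) + 1 := by exact_mod_cast hSA
    linarith
  have hE : 2 * ((n:ℝ)+1) * (1/2 - (S:ℝ)/((n:ℝ)+1)) = (A:ℝ) - (S:ℝ) := by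
    have hn : ((n:ℝ)+1) ≠ 0 := by positivity
    rw [hcastA]
    field_simp
    ring
  have hρ : (0:ℝ) < ε / (1-ε) := div_pos hε0 h1ε
  have hrpow : (ε/(1-ε)) ^ (2*((n:ℝ)+1)*(1/2 - (S:ℝ)/((n:ℝ)+1)))
      = (ε/(1-ε))^A / (ε/(1-ε))^S := by
    rw [hE, Real.rpow_sub hρ, Real.rpow_natCast, Real.rpow_natCast]
  rw [hrpow]
  have hd1 : (0:ℝ) < ε^A*(1-ε)^S + ε^S*(1-ε)^A := by positivity
  have hd2 : (0:ℝ) < 1 + (ε/(1-ε))^A / (ε/(1-ε))^S := by positivity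
  rw [div_eq_div_iff hd1.ne' hd2.ne']
  have hρS : ((ε/(1-ε))^S : ℝ) ≠ 0 := pow_ne_zero _ hρ.ne'
  have h1εne : (1 - ε) ≠ 0 := h1ε.ne'
  rw [div_pow, div_pow]
  field_simp
  ring
end

section
/- For every function f : ℕ → ℕ* with f(n) → ∞, there exists an uncountable set D ⊆ {0,1}^{-ℕ*} whose growth function satisfies d(n) := |{x_{-n}^{-1} : x̄ ∈ D}| ≤ f(n) for all n (and D can be enlarged to achieve equality while remaining uncountable). -/
/-! Choose thresholds `N 0 < N 1 < ⋯` with `2 ^ (k + 1) ≤ f n` for `n ≥ N k`. A past is built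
from a bit sequence `g` by writing `false` on `[0, N 0)` and the constant `g k` on the block
`[N k, N (k + 1))`. Distinct `g` give distinct pasts, so there are uncountably many of them,
while a window of length `n ≤ N (k + 1)` sees only the bits `g 0, …, g k`. -/

open Filter

theorem exists_strictMono_forall_le_of_tendsto {u : ℕ → ℕ} (hu : Tendsto u atTop atTop)
    (b : ℕ → ℕ) : ∃ N : ℕ → ℕ, StrictMono N ∧ ∀ k n, N k ≤ n → b k ≤ u n :=
  extraction_forall_of_eventually fun k =>
    eventually_forall_ge_atTop.2 (hu.eventually_ge_atTop (b k))

instance : Uncountable (ℕ → Bool) := by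
  rw [← Cardinal.aleph0_lt_mk_iff, ← Cardinal.power_def, Cardinal.mk_bool, Cardinal.mk_nat]
  exact Cardinal.cantor _

def prefixes {α : Type*} (D : Set (ℕ → α)) (n : ℕ) : Set (Fin n → α) :=
  {w | ∃ x ∈ D, ∀ i : Fin n, x i = w i}

theorem ncard_prefixes_range_le {α β : Type*} [Fintype β] [Inhabited β]
    (F : (ℕ → β) → ℕ → α) {n m : ℕ}
    (hF : ∀ g g', (∀ j < m, g j = g' j) → ∀ i < n, F g i = F g' i) :
    (prefixes (Set.range F) n).ncard ≤ Fintype.card β ^ m := by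
  let extend (h : Fin m → β) (j : ℕ) : β := if hj : j < m then h ⟨j, hj⟩ else default
  have hsub : prefixes (Set.range F) n ⊆ Set.range fun h (i : Fin n) => F (extend h) i := by
    rintro w ⟨_, ⟨g, rfl⟩, hw⟩
    refine ⟨fun j => g j, funext fun i => ?_⟩
    rw [← hw i]
    exact hF _ _ (fun j hj => by simp [extend, hj]) i i.2
  calc (prefixes (Set.range F) n).ncard
      ≤ (Set.range fun h (i : Fin n) => F (extend h) i).ncard :=
        Set.ncard_le_ncard hsub (Set.finite_range _)
    _ ≤ Nat.card (Fin m → β) := Finite.card_range_le _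
    _ = Fintype.card β ^ m := by simp

section BlockSeq

variable {α : Type*} (a : α) (ℓ : ℕ → ℕ)

def blockSeq (g : ℕ → α) (i : ℕ) : α :=
  match ℓ i with
  | 0 => a
  | k + 1 => g k

theorem blockSeq_eq_of_forall_lt {g g' : ℕ → α} {m : ℕ} (hg : ∀ j < m, g j = g' j) {i : ℕ}
    (hi : ℓ i ≤ m) : blockSeq a ℓ g i = blockSeq a ℓ g' i := by
  unfold blockSeq
  split
  · rfl
  · exact hg _ (by omega)

theorem blockSeq_injective (hℓ : ∀ k, ∃ i, ℓ i = k + 1) :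
    Function.Injective (blockSeq a ℓ) := by
  intro g g' h
  funext k
  obtain ⟨i, hi⟩ := hℓ k
  simpa [blockSeq, hi] using congrFun h i

theorem ncard_prefixes_range_blockSeq_le [Fintype α] (hℓ : Monotone ℓ) (n : ℕ) :
    (prefixes (Set.range (blockSeq a ℓ)) n).ncard ≤ Fintype.card α ^ ℓ (n - 1) :=
  haveI : Inhabited α := ⟨a⟩
  ncard_prefixes_range_le _ fun _ _ hg _ hi =>
    blockSeq_eq_of_forall_lt a ℓ hg (hℓ (by omega))

end BlockSeq

section Level

variable {N : ℕ → ℕ} (hN : StrictMono N)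

def level (i : ℕ) : ℕ :=
  Nat.find (⟨i + 1, (Nat.lt_succ_self i).trans_le (hN.id_le _)⟩ : ∃ k, i < N k)

theorem level_mono : Monotone (level hN) :=
  fun _ _ hij => Nat.find_mono fun _ h => hij.trans_lt h

theorem level_apply_self (k : ℕ) : level hN (N k) = k + 1 :=
  (Nat.find_eq_iff _).2 ⟨hN (Nat.lt_succ_self k), fun _ hj => not_lt.2 (hN.monotone (by omega))⟩

theorem le_of_level_eq_succ {i m : ℕ} (h : level hN i = m + 1) : N m ≤ i :=
  not_lt.1 (Nat.find_min (m := m) _ (show m < level hN i by omega))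

end Level

/-- For every diverging `f : ℕ → ℕ*` there is an uncountable set `D` of left-infinite
binary sequences (pasts, coded by `ℕ → Bool` with index `i` for coordinate `-(i+1)`)
whose growth function `d(n) = |D^n|` satisfies `d(n) ≤ f(n)` for all `n ≥ 1`. -/
theorem uncountable_set_with_slow_growth
    (f : ℕ → ℕ) (hf1 : ∀ n, 1 ≤ f n) (hf : Tendsto f atTop atTop) :
    ∃ D : Set (ℕ → Bool), ¬ D.Countable ∧
      ∀ n : ℕ, 1 ≤ n →
        Set.ncard {w : Fin n → Bool | ∃ x ∈ D, ∀ i : Fin n, x i = w i} ≤ f n := by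
  obtain ⟨N, hN, hfN⟩ := exists_strictMono_forall_le_of_tendsto hf fun k => 2 ^ (k + 1)
  have hinj := blockSeq_injective false (level hN) fun k => ⟨N k, level_apply_self hN k⟩
  refine ⟨Set.range (blockSeq false (level hN)), fun hD => ?_, fun n _ => ?_⟩
  · exact Set.not_countable_univ (by simpa using hD.preimage hinj)
  · refine (ncard_prefixes_range_blockSeq_le false _ (level_mono hN) n).trans ?_
    rw [Fintype.card_bool]
    cases hm : level hN (n - 1) with
    | zero => exact hf1 n
    | succ m => exact hfN m n ((le_of_level_eq_succ hN hm).trans (Nat.sub_le n 1))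
end

section
/- On A = {0,1}, define the g-function ĝ by ĝ(x̄, 1) = 0.3 if limsup_n (1/n) Σ_{i=1}^n x_{-i} > 1/2 and ĝ(x̄, 1) = 0.7 otherwise. Then there exists no shift-invariant probability measure on {0,1}^ℤ compatible with ĝ, even though inf ĝ = 0.3 > 0. -/
open MeasureTheory Filter
open scoped Classical

/-- The past of a bi-infinite binary sequence: `negPart y i = y_{-(i+1)}`. -/
def negPart (y : ℤ → Bool) : ℕ → Bool := fun i => y (-(i + 1) : ℤ)

/-- The σ-algebra `F^-` of the coordinates in `(-∞, -1]`. -/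
def Fminus : MeasurableSpace (ℤ → Bool) := MeasurableSpace.comap _root_.negPart inferInstance

/-- The left shift on `Bool^ℤ`. -/
def shiftZ (x : ℤ → Bool) : ℤ → Bool := fun n => x (n + 1)

/-- Pasts with upper density of `1`'s exceeding `1/2`. -/
def XgtHalf : Set (ℕ → Bool) :=
  {p | 1 / 2 < Filter.limsup
    (fun n : ℕ => (∑ i ∈ Finset.range n, (if p i then (1 : ℝ) else 0)) / n) atTop}

/-- Noam Berger's example: `ĝ(x̄, 1) = 0.3` if the upper density of `1`'s in `x̄`
exceeds `1/2`, and `0.7` otherwise. -/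
noncomputable def ghat (p : ℕ → Bool) (a : Bool) : ℝ :=
  if a then (if p ∈ XgtHalf then 0.3 else 0.7) else (if p ∈ XgtHalf then 0.7 else 0.3)


-- limsup equality when difference tends to 0, v has values in [0,1]
lemma limsup_eq_of_sub_tendsto (u v : ℕ → ℝ) (hv0 : ∀ n, 0 ≤ v n) (hv1 : ∀ n, v n ≤ 1)
    (h : Tendsto (fun n => u n - v n) atTop (nhds 0)) :
    limsup u atTop = limsup v atTop := by
  have hvb : IsBoundedUnder (· ≤ ·) atTop v := isBoundedUnder_of ⟨1, hv1⟩
  have hvb' : IsBoundedUnder (· ≥ ·) atTop v := isBoundedUnder_of ⟨0, hv0⟩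
  have hub : IsBoundedUnder (· ≤ ·) atTop u := by
    obtain ⟨N, hN⟩ := (Metric.tendsto_atTop.mp h 1 one_pos)
    refine ⟨2, eventually_map.mpr (eventually_atTop.mpr ⟨N, fun n hn => ?_⟩)⟩
    have h1 := hN n hn
    simp only [Real.dist_eq, sub_zero] at h1
    have h2 := abs_lt.mp h1
    have h3 := hv1 n; simp only; linarith [h2.2]
  have hub' : IsBoundedUnder (· ≥ ·) atTop u := by
    obtain ⟨N, hN⟩ := (Metric.tendsto_atTop.mp h 1 one_pos)
    refine ⟨-1, eventually_map.mpr (eventually_atTop.mpr ⟨N, fun n hn => ?_⟩)⟩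
    have h1 := hN n hn
    simp only [Real.dist_eq, sub_zero] at h1
    have h2 := abs_lt.mp h1
    have h3 := hv0 n; simp only; linarith [h2.1]
  have key : ∀ ε : ℝ, 0 < ε → limsup u atTop ≤ limsup v atTop + ε ∧
      limsup v atTop ≤ limsup u atTop + ε := by
    intro ε hε
    obtain ⟨N, hN⟩ := (Metric.tendsto_atTop.mp h ε hε)
    constructor
    · have h1 : limsup u atTop ≤ limsup (fun n => v n + ε) atTop := by
        apply limsup_le_limsup (by
          refine eventually_atTop.mpr ⟨N, fun n hn => ?_⟩
          have h1 := hN n hn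
          simp only [Real.dist_eq, sub_zero] at h1
          show u n ≤ v n + ε
          linarith [(abs_lt.mp h1).2])
          (hub'.isCoboundedUnder_le)
          (isBoundedUnder_of ⟨1 + ε, fun n => by linarith [hv1 n]⟩)
      rwa [limsup_add_const atTop v ε hvb hvb'.isCoboundedUnder_le] at h1
    · have h1 : limsup v atTop ≤ limsup (fun n => u n + ε) atTop := by
        apply limsup_le_limsup (by
          refine eventually_atTop.mpr ⟨N, fun n hn => ?_⟩
          have h1 := hN n hn
          simp only [Real.dist_eq, sub_zero] at h1
          show v n ≤ u n + ε
          linarith [(abs_lt.mp h1).1])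
          (hvb'.isCoboundedUnder_le)
          (by obtain ⟨C, hC⟩ := hub
              refine ⟨C + ε, eventually_map.mpr ?_⟩
              filter_upwards [eventually_map.mp hC] with n hn
              exact add_le_add_left hn ε)
      rwa [limsup_add_const atTop u ε hub hub'.isCoboundedUnder_le] at h1
  have h1 := le_of_forall_pos_le_add (fun ε hε => (key ε hε).1)
  have h2 := le_of_forall_pos_le_add (fun ε hε => (key ε hε).2)
  linarith

lemma sum_ind_le (p : ℕ → Bool) (n : ℕ) :
    (∑ i ∈ Finset.range n, (if p i then (1 : ℝ) else 0)) ≤ n := by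
  calc (∑ i ∈ Finset.range n, (if p i then (1 : ℝ) else 0))
      ≤ ∑ i ∈ Finset.range n, 1 := by
        apply Finset.sum_le_sum; intro i _; split <;> norm_num
    _ = n := by simp

lemma sum_ind_nonneg (p : ℕ → Bool) (n : ℕ) :
    0 ≤ (∑ i ∈ Finset.range n, (if p i then (1 : ℝ) else 0)) := by
  apply Finset.sum_nonneg; intro i _; split <;> norm_num

lemma avg_nonneg (p : ℕ → Bool) (n : ℕ) :
    0 ≤ (∑ i ∈ Finset.range n, (if p i then (1 : ℝ) else 0)) / n :=
  div_nonneg (sum_ind_nonneg p n) (Nat.cast_nonneg n)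

lemma avg_le_one (p : ℕ → Bool) (n : ℕ) :
    (∑ i ∈ Finset.range n, (if p i then (1 : ℝ) else 0)) / n ≤ 1 := by
  rcases Nat.eq_zero_or_pos n with h | h
  · simp [h]
  · rw [div_le_one (by exact_mod_cast h)]
    exact sum_ind_le p n

lemma XgtHalf_shift_lemma (p : ℕ → Bool) (m : ℕ) :
    ((fun i => p (i + m)) ∈ XgtHalf) ↔ p ∈ XgtHalf := by
  have key : limsup (fun n : ℕ => (∑ i ∈ Finset.range n, (if p (i + m) then (1 : ℝ) else 0)) / n) atTop
      = limsup (fun n : ℕ => (∑ i ∈ Finset.range n, (if p i then (1 : ℝ) else 0)) / n) atTop := by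
    have hshift : limsup (fun n : ℕ => (∑ i ∈ Finset.range (n + m), (if p i then (1 : ℝ) else 0)) / ((n + m : ℕ) : ℝ)) atTop
        = limsup (fun n : ℕ => (∑ i ∈ Finset.range n, (if p i then (1 : ℝ) else 0)) / n) atTop := by
      exact limsup_nat_add (fun n : ℕ => (∑ i ∈ Finset.range n, (if p i then (1 : ℝ) else 0)) / n) m
    rw [← hshift]
    apply limsup_eq_of_sub_tendsto
    · intro n; exact avg_nonneg p (n + m)
    · intro n; exact avg_le_one p (n + m)
    · -- difference tends to 0
      refine squeeze_zero_norm' (a := fun n : ℕ => (2 * m : ℝ) / n) ?_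
          (tendsto_const_div_atTop_nhds_zero_nat (2 * m : ℝ))
      refine eventually_atTop.mpr ⟨1, fun n hn => ?_⟩
      show ‖(∑ i ∈ Finset.range n, (if p (i + m) then (1 : ℝ) else 0)) / n
          - (∑ i ∈ Finset.range (n + m), (if p i then (1 : ℝ) else 0)) / (((n + m : ℕ)) : ℝ)‖
          ≤ 2 * m / n
      rw [Nat.add_comm n m]
      have hsum : (∑ i ∈ Finset.range n, (if p (i + m) then (1 : ℝ) else 0))
          = (∑ i ∈ Finset.range (m + n), (if p i then (1 : ℝ) else 0))
            - (∑ i ∈ Finset.range m, (if p i then (1 : ℝ) else 0)) := by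
        rw [Finset.sum_range_add]
        have : ∀ i, (if p (m + i) then (1:ℝ) else 0) = (if p (i + m) then (1:ℝ) else 0) := by
          intro i; rw [Nat.add_comm]
        simp [this]
      set A := (∑ i ∈ Finset.range (m + n), (if p i then (1 : ℝ) else 0)) with hA
      set B := (∑ i ∈ Finset.range m, (if p i then (1 : ℝ) else 0)) with hB
      have hN : (1:ℝ) ≤ n := by exact_mod_cast hn
      have hnpos : (0:ℝ) < n := by linarith
      have hnm : (0:ℝ) < (n:ℝ) + m := by positivity
      have hAle : A ≤ (m + n : ℝ) := by have := sum_ind_le p (m + n); push_cast at this; exact this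
      have hA0 : 0 ≤ A := sum_ind_nonneg p (m+n)
      have hBle : B ≤ (m : ℝ) := by have := sum_ind_le p m; push_cast at this; exact this
      have hB0 : 0 ≤ B := sum_ind_nonneg p m
      rw [hsum, Real.norm_eq_abs]
      push_cast
      rw [show ((m:ℝ) + n) = (n:ℝ) + m by ring]
      rw [abs_le]
      have hpos2 : (0:ℝ) < n * ((n:ℝ) + m) := by positivity
      constructor
      · rw [div_sub_div _ _ (ne_of_gt hnpos) (ne_of_gt hnm), neg_le, ← neg_div,
          div_le_div_iff₀ hpos2 hnpos]
        have hm0 : (0:ℝ) ≤ m := Nat.cast_nonneg m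
        nlinarith [mul_le_mul_of_nonneg_right (mul_le_mul_of_nonneg_right hBle hnpos.le) hnpos.le,
          mul_le_mul_of_nonneg_right (mul_le_mul_of_nonneg_right hBle hm0) hnpos.le,
          mul_nonneg (mul_nonneg hA0 hm0) hnpos.le, mul_nonneg (mul_nonneg hm0 hnpos.le) hnpos.le,
          mul_nonneg (mul_nonneg hm0 hm0) hnpos.le]
      · rw [div_sub_div _ _ (ne_of_gt hnpos) (ne_of_gt hnm), div_le_div_iff₀ hpos2 hnpos]
        have hm0 : (0:ℝ) ≤ m := Nat.cast_nonneg m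
        nlinarith [mul_le_mul_of_nonneg_right (mul_le_mul_of_nonneg_right hAle hm0) hnpos.le,
          mul_nonneg (mul_nonneg hB0 hnpos.le) hnpos.le,
          mul_nonneg (mul_nonneg hB0 hm0) hnpos.le,
          mul_nonneg (mul_nonneg hm0 hnpos.le) hnpos.le,
          mul_nonneg (mul_nonneg hm0 hm0) hnpos.le]
  constructor <;> intro h <;> simp only [XgtHalf, Set.mem_setOf_eq] at h ⊢
  · rwa [key] at h
  · rwa [key]

lemma tendsto_nat_sqrt_atTop : Tendsto Nat.sqrt atTop atTop := by
  apply tendsto_atTop_atTop.mpr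
  intro b
  exact ⟨b * b, fun n hn => Nat.le_sqrt.mpr hn⟩

lemma cesaro_of_squares (v : ℕ → ℝ) (h0 : ∀ k, 0 ≤ v k) (h1 : ∀ k, v k ≤ 1) (L : ℝ)
    (h : Tendsto (fun m : ℕ => (∑ k ∈ Finset.range (m * m), v k) / (m * m : ℕ)) atTop (nhds L)) :
    Tendsto (fun n : ℕ => (∑ k ∈ Finset.range n, v k) / n) atTop (nhds L) := by
  set u : ℕ → ℝ := fun n => ∑ k ∈ Finset.range n, v k with hu
  have hu0 : ∀ n, 0 ≤ u n := fun n => Finset.sum_nonneg (fun k _ => h0 k)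
  have huleq : ∀ n, u n ≤ n := by
    intro n
    calc u n ≤ ∑ k ∈ Finset.range n, 1 := Finset.sum_le_sum (fun k _ => h1 k)
      _ = n := by simp
  have humono : ∀ {a b : ℕ}, a ≤ b → u a ≤ u b := by
    intro a b hab
    apply Finset.sum_le_sum_of_subset_of_nonneg (Finset.range_subset_range.mpr hab)
    intro k _ _; exact h0 k
  have hudiff : ∀ {a b : ℕ}, a ≤ b → u b ≤ u a + ((b - a : ℕ) : ℝ) := by
    intro a b hab
    have he : u b = u a + ∑ k ∈ Finset.range (b - a), v (a + k) := by
      rw [hu]; simp only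
      rw [← Finset.sum_range_add, Nat.add_sub_cancel' hab]
    rw [he]
    have hle : ∑ k ∈ Finset.range (b - a), v (a + k) ≤ ((b - a : ℕ) : ℝ) := by
      calc ∑ k ∈ Finset.range (b - a), v (a + k) ≤ ∑ k ∈ Finset.range (b - a), 1 :=
            Finset.sum_le_sum (fun k _ => h1 _)
        _ = ((b - a : ℕ) : ℝ) := by simp
    linarith
  have hsq : Tendsto (fun n : ℕ => u (Nat.sqrt n * Nat.sqrt n) / ((Nat.sqrt n * Nat.sqrt n : ℕ) : ℝ)) atTop (nhds L) :=
    h.comp tendsto_nat_sqrt_atTop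
  have hdiff : Tendsto (fun n : ℕ => u n / n - u (Nat.sqrt n * Nat.sqrt n) / ((Nat.sqrt n * Nat.sqrt n : ℕ) : ℝ)) atTop (nhds 0) := by
    refine squeeze_zero_norm' (a := fun n : ℕ => 4 / (Nat.sqrt n : ℝ)) ?_
      ((tendsto_const_div_atTop_nhds_zero_nat 4).comp tendsto_nat_sqrt_atTop)
    refine eventually_atTop.mpr ⟨1, fun n hn => ?_⟩
    show ‖u n / n - u (Nat.sqrt n * Nat.sqrt n) / ((Nat.sqrt n * Nat.sqrt n : ℕ) : ℝ)‖
        ≤ 4 / (Nat.sqrt n : ℝ)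
    set m := Nat.sqrt n with hm
    have hqn : m * m ≤ n := by
      have := Nat.sqrt_le' n; rwa [pow_two] at this
    have hn2 : n < (m + 1) * (m + 1) := by
      have := Nat.lt_succ_sqrt' n
      rwa [Nat.succ_eq_add_one, pow_two] at this
    have hexp : (m + 1) * (m + 1) = m * m + 2 * m + 1 := by ring
    have hn2' : n ≤ m * m + 2 * m := by omega
    have hm1 : 1 ≤ m := by
      rcases Nat.eq_zero_or_pos m with hz | hp
      · exfalso; rw [hz] at hn2'; simp at hn2'; omega
      · exact hp
    set a := u (m * m) with ha
    set b := u n with hb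
    set qr := ((m * m : ℕ) : ℝ) with hqr
    have hq : qr = (m:ℝ) * m := by rw [hqr]; push_cast; ring
    have hmr : (1:ℝ) ≤ m := by exact_mod_cast hm1
    have hqpos : (0:ℝ) < qr := by rw [hq]; nlinarith
    have hnr : (0:ℝ) < n := by
      have : (1:ℝ) ≤ n := by exact_mod_cast hn
      linarith
    have hqler : qr ≤ (n:ℝ) := by rw [hqr]; exact_mod_cast hqn
    have hab : a ≤ b := humono hqn
    have ha0 : (0:ℝ) ≤ a := hu0 _
    have hsubn : (n:ℝ) ≤ qr + 2 * m := by
      rw [hqr]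
      have : n ≤ m * m + 2 * m := hn2'
      calc (n:ℝ) ≤ ((m * m + 2 * m : ℕ) : ℝ) := by exact_mod_cast this
        _ = ((m*m : ℕ) : ℝ) + 2 * m := by push_cast; ring
    have hba : b ≤ a + 2 * m := by
      have h2 := hudiff hqn
      have h3 : ((n - m * m : ℕ) : ℝ) ≤ 2 * m := by
        have : n - m * m ≤ 2 * m := by omega
        calc ((n - m * m : ℕ) : ℝ) ≤ ((2 * m : ℕ) : ℝ) := by exact_mod_cast this
          _ = 2 * m := by push_cast; ring
      rw [← hb, ← ha] at h2
      linarith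
    have haq : a ≤ qr := by rw [hqr]; exact huleq (m*m)
    rw [Real.norm_eq_abs, abs_le]
    have hmpos : (0:ℝ) < m := by linarith
    constructor
    · rw [div_sub_div _ _ (ne_of_gt hnr) (ne_of_gt hqpos), neg_le, ← neg_div,
        div_le_div_iff₀ (by positivity) hmpos]
      nlinarith [mul_le_mul_of_nonneg_left hqler ha0,
        mul_le_mul_of_nonneg_right hba hqpos.le,
        mul_le_mul_of_nonneg_right hqler hqpos.le,
        mul_pos hnr hqpos, mul_le_mul_of_nonneg_left hsubn ha0,
        mul_le_mul_of_nonneg_right haq (by linarith : (0:ℝ) ≤ (n:ℝ) - qr),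
        mul_le_mul_of_nonneg_right hsubn hqpos.le]
    · rw [div_sub_div _ _ (ne_of_gt hnr) (ne_of_gt hqpos),
        div_le_div_iff₀ (by positivity) hmpos]
      nlinarith [mul_le_mul_of_nonneg_left hqler ha0,
        mul_le_mul_of_nonneg_right hba hqpos.le,
        mul_le_mul_of_nonneg_right hqler hqpos.le,
        mul_pos hnr hqpos, mul_le_mul_of_nonneg_left hsubn ha0,
        mul_le_mul_of_nonneg_right haq (by linarith : (0:ℝ) ≤ (n:ℝ) - qr),
        mul_le_mul_of_nonneg_right hsubn hqpos.le]
  have heq : (fun n : ℕ => u n / n) = fun n => (u n / n - u (Nat.sqrt n * Nat.sqrt n) / ((Nat.sqrt n * Nat.sqrt n : ℕ) : ℝ)) + u (Nat.sqrt n * Nat.sqrt n) / ((Nat.sqrt n * Nat.sqrt n : ℕ) : ℝ) := by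
    funext n; ring
  rw [heq]
  have := hdiff.add hsq
  simpa using this

-- ## new defs
def tauPow (m : ℕ) (y : ℤ → Bool) : ℤ → Bool := fun n => y (n - m)

noncomputable def cfun (y : ℤ → Bool) : ℝ := if _root_.negPart y ∈ XgtHalf then 0.3 else 0.7

noncomputable def Ffun (y : ℤ → Bool) : ℝ := (if y 0 = true then (1:ℝ) else 0) - cfun y

noncomputable def Gfun (m : ℕ) (y : ℤ → Bool) : ℝ := (if _root_.negPart y m then (1:ℝ) else 0) - cfun y

-- ## measurability
lemma measurable_negPart_pi : Measurable (_root_.negPart) := by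
  apply measurable_pi_lambda
  intro i
  exact measurable_pi_apply _

lemma measurable_shiftZ : Measurable shiftZ := by
  apply measurable_pi_lambda; intro i; exact measurable_pi_apply _

lemma measurable_tauPow (m : ℕ) : Measurable (tauPow m) := by
  apply measurable_pi_lambda; intro i; exact measurable_pi_apply _

lemma measurableSet_XgtHalf : MeasurableSet XgtHalf := by
  have hmeas : Measurable (fun p : ℕ → Bool =>
      limsup (fun n : ℕ => (∑ i ∈ Finset.range n, (if p i then (1 : ℝ) else 0)) / n) atTop) := by
    apply Measurable.limsup
    intro n
    apply Measurable.div_const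
    apply Finset.measurable_sum
    intro i _
    have h1 : Measurable (fun p : ℕ → Bool => p i) := measurable_pi_apply i
    exact (measurable_from_top (f := fun b : Bool => if b then (1:ℝ) else 0)).comp h1
  exact measurableSet_lt measurable_const hmeas

lemma hFminus_le : Fminus ≤ MeasurableSpace.pi := by
  rw [Fminus]
  exact measurable_iff_comap_le.mp measurable_negPart_pi

lemma measurable_negPart' : Measurable[Fminus] (_root_.negPart) :=
  measurable_iff_comap_le.mpr le_rfl

lemma measurable_cfun' : Measurable[Fminus] cfun := by
  have h : Measurable (fun p : ℕ → Bool => if p ∈ XgtHalf then (0.3:ℝ) else 0.7) :=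
    Measurable.ite measurableSet_XgtHalf measurable_const measurable_const
  exact h.comp measurable_negPart'

lemma measurable_cfun : Measurable cfun := measurable_cfun'.mono hFminus_le le_rfl

lemma measurable_Gfun' (m : ℕ) : Measurable[Fminus] (Gfun m) := by
  apply Measurable.sub _ measurable_cfun'
  have h1 : Measurable[Fminus] (fun y => _root_.negPart y m) :=
    (measurable_pi_apply m).comp measurable_negPart'
  exact (measurable_from_top (f := fun b : Bool => if b = true then (1:ℝ) else 0)).comp h1

lemma measurable_Gfun (m : ℕ) : Measurable (Gfun m) := (measurable_Gfun' m).mono hFminus_le le_rfl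

lemma measurable_Ffun : Measurable Ffun := by
  apply Measurable.sub _ measurable_cfun
  have h1 : Measurable (fun y : ℤ → Bool => y 0) := measurable_pi_apply 0
  exact (measurable_from_top (f := fun b : Bool => if b = true then (1:ℝ) else 0)).comp h1

-- ## bounds
lemma cfun_bound (y : ℤ → Bool) : |cfun y| ≤ 1 := by
  rw [cfun]; split <;> rw [abs_le] <;> norm_num

lemma cfun_nonneg (y : ℤ → Bool) : 0 ≤ cfun y := by
  rw [cfun]; split <;> norm_num

lemma cfun_le (y : ℤ → Bool) : cfun y ≤ 1 := by
  rw [cfun]; split <;> norm_num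

lemma Ffun_bound (y : ℤ → Bool) : |Ffun y| ≤ 1 := by
  rw [Ffun, abs_le]
  have h1 := cfun_nonneg y
  have h2 := cfun_le y
  constructor <;> split <;> linarith

lemma Gfun_bound (m : ℕ) (y : ℤ → Bool) : |Gfun m y| ≤ 1 := by
  rw [Gfun, abs_le]
  have h1 := cfun_nonneg y
  have h2 := cfun_le y
  constructor <;> split <;> linarith

-- ## composition identities
lemma negPart_tauPow (m : ℕ) (y : ℤ → Bool) :
    _root_.negPart (tauPow m y) = fun i => _root_.negPart y (i + m) := by
  funext i
  simp only [_root_.negPart, tauPow]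
  congr 1
  push_cast
  ring

lemma cfun_tauPow (m : ℕ) (y : ℤ → Bool) : cfun (tauPow m y) = cfun y := by
  rw [cfun, cfun, negPart_tauPow]
  rw [if_congr (XgtHalf_shift_lemma (_root_.negPart y) m) rfl rfl]

lemma Ffun_tauPow (k : ℕ) (y : ℤ → Bool) : Ffun (tauPow (k + 1) y) = Gfun k y := by
  have hcoord : tauPow (k+1) y 0 = _root_.negPart y k := by
    simp only [tauPow, _root_.negPart]
    congr 1
  rw [Ffun, Gfun, cfun_tauPow, hcoord]

lemma Gfun_tauPow (j k : ℕ) (h : j < k) (y : ℤ → Bool) :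
    Gfun (k - j - 1) (tauPow (j + 1) y) = Gfun k y := by
  rw [Gfun, Gfun, cfun_tauPow, negPart_tauPow]
  have h2 : k - j - 1 + (j + 1) = k := by omega
  beta_reduce
  rw [h2]

section Meas
variable {μ : Measure (ℤ → Bool)} [IsProbabilityMeasure μ]

lemma map_tauPow (hshift : μ.map shiftZ = μ) (m : ℕ) : μ.map (tauPow m) = μ := by
  induction m with
  | zero =>
    have : tauPow 0 = id := by funext y n; simp [tauPow]
    rw [this, Measure.map_id]
  | succ m ih =>
    have hcomp : tauPow (m + 1) = tauPow m ∘ (tauPow 1) := by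
      funext y n
      simp only [tauPow, Function.comp_apply]
      congr 1
      push_cast
      ring
    have h1 : μ.map (tauPow 1) = μ := by
      conv_lhs => rw [← hshift]
      rw [Measure.map_map (measurable_tauPow 1) measurable_shiftZ]
      have : tauPow 1 ∘ shiftZ = id := by
        funext y n
        simp only [tauPow, shiftZ, Function.comp_apply, id]
        congr 1
        push_cast
        ring
      rw [this, Measure.map_id]
    rw [hcomp, ← Measure.map_map (measurable_tauPow m) (measurable_tauPow 1), h1, ih]

lemma integral_comp_tauPow (hshift : μ.map shiftZ = μ) (m : ℕ) (φ : (ℤ → Bool) → ℝ)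
    (hφ : Measurable φ) : ∫ y, φ (tauPow m y) ∂μ = ∫ y, φ y ∂μ := by
  conv_rhs => rw [← map_tauPow hshift m]
  rw [integral_map (measurable_tauPow m).aemeasurable]
  rw [map_tauPow hshift m]
  exact hφ.aestronglyMeasurable

lemma integrable_of_bdd {f : (ℤ → Bool) → ℝ} (hf : Measurable f) (C : ℝ)
    (h : ∀ y, |f y| ≤ C) : Integrable f μ := by
  apply Integrable.mono' (integrable_const C) hf.aestronglyMeasurable
  exact ae_of_all _ (fun y => by rw [Real.norm_eq_abs]; exact h y)

-- Claim A
lemma keyA (hcomp : (fun y => ghat (_root_.negPart y) true)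
      =ᵐ[μ] μ[(fun y => if y 0 = true then (1 : ℝ) else 0) | Fminus])
    (G : (ℤ → Bool) → ℝ) (hG : Measurable[Fminus] G) (hGb : ∀ y, |G y| ≤ 1) :
    ∫ y, G y * Ffun y ∂μ = 0 := by
  set f1 : (ℤ → Bool) → ℝ := fun y => if y 0 = true then (1 : ℝ) else 0 with hf1
  have hf1m : Measurable f1 := by
    have h1 : Measurable (fun y : ℤ → Bool => y 0) := measurable_pi_apply 0
    exact (measurable_from_top (f := fun b : Bool => if b = true then (1:ℝ) else 0)).comp h1
  have hf1b : ∀ y, |f1 y| ≤ 1 := by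
    intro y; rw [hf1]; simp only; split <;> rw [abs_le] <;> norm_num
  have hGm : Measurable G := hG.mono hFminus_le le_rfl
  have hint_f1 : Integrable f1 μ := integrable_of_bdd hf1m 1 hf1b
  have hint_Gf1 : Integrable (G * f1) μ := by
    apply integrable_of_bdd (hGm.mul hf1m) 1
    intro y
    show |G y * f1 y| ≤ 1
    rw [abs_mul]
    calc |G y| * |f1 y| ≤ 1 * 1 := by
          apply mul_le_mul (hGb y) (hf1b y) (abs_nonneg _) zero_le_one
      _ = 1 := by norm_num
  have hghat : (fun y => ghat (_root_.negPart y) true) = cfun := by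
    funext y; rw [ghat, cfun]; simp
  rw [hghat] at hcomp
  -- pull-out property
  have hpull : μ[G * f1 | Fminus] =ᵐ[μ] G * μ[f1 | Fminus] :=
    condExp_mul_of_stronglyMeasurable_left hG.stronglyMeasurable hint_Gf1 hint_f1
  have hint1 : ∫ y, (G * f1) y ∂μ = ∫ y, (G * μ[f1 | Fminus]) y ∂μ := by
    rw [← integral_condExp hFminus_le (f := G * f1)]
    exact integral_congr_ae hpull
  have hint2 : ∫ y, (G * μ[f1 | Fminus]) y ∂μ = ∫ y, G y * cfun y ∂μ := by
    apply integral_congr_ae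
    filter_upwards [hcomp] with y hy
    rw [Pi.mul_apply, ← hy]
  have hint_Gc : Integrable (fun y => G y * cfun y) μ := by
    apply integrable_of_bdd (hGm.mul measurable_cfun) 1
    intro y
    show |G y * cfun y| ≤ 1
    rw [abs_mul]
    calc |G y| * |cfun y| ≤ 1 * 1 :=
          mul_le_mul (hGb y) (cfun_bound y) (abs_nonneg _) zero_le_one
      _ = 1 := by norm_num
  have : ∫ y, G y * Ffun y ∂μ
      = ∫ y, (G * f1) y ∂μ - ∫ y, G y * cfun y ∂μ := by
    rw [← integral_sub hint_Gf1 hint_Gc]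
    congr 1
    funext y
    rw [Pi.mul_apply, Ffun]
    ring
  rw [this, hint1, hint2, sub_self]

-- orthogonality
lemma orth (hshift : μ.map shiftZ = μ)
    (hcomp : (fun y => ghat (_root_.negPart y) true)
      =ᵐ[μ] μ[(fun y => if y 0 = true then (1 : ℝ) else 0) | Fminus])
    {j k : ℕ} (h : j < k) :
    ∫ y, Gfun j y * Gfun k y ∂μ = 0 := by
  have heq : ∀ y, Gfun j y * Gfun k y
      = (fun z => Gfun (k - j - 1) z * Ffun z) (tauPow (j + 1) y) := by
    intro y
    simp only
    rw [Ffun_tauPow j y, Gfun_tauPow j k h y, mul_comm]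
  have hmeas : Measurable (fun z => Gfun (k - j - 1) z * Ffun z) :=
    (measurable_Gfun _).mul measurable_Ffun
  calc ∫ y, Gfun j y * Gfun k y ∂μ
      = ∫ y, (fun z => Gfun (k - j - 1) z * Ffun z) (tauPow (j + 1) y) ∂μ := by
        apply integral_congr_ae; exact ae_of_all _ heq
    _ = ∫ z, Gfun (k - j - 1) z * Ffun z ∂μ := integral_comp_tauPow hshift (j+1) _ hmeas
    _ = 0 := keyA hcomp (Gfun (k - j - 1)) (measurable_Gfun' _) (Gfun_bound _)

lemma integrable_GG (j k : ℕ) : Integrable (fun y => Gfun j y * Gfun k y) μ := by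
  apply integrable_of_bdd ((measurable_Gfun j).mul (measurable_Gfun k)) 1
  intro y
  show |Gfun j y * Gfun k y| ≤ 1
  rw [abs_mul]
  calc |Gfun j y| * |Gfun k y| ≤ 1 * 1 :=
        mul_le_mul (Gfun_bound j y) (Gfun_bound k y) (abs_nonneg _) zero_le_one
    _ = 1 := by norm_num

lemma second_moment (hshift : μ.map shiftZ = μ)
    (hcomp : (fun y => ghat (_root_.negPart y) true)
      =ᵐ[μ] μ[(fun y => if y 0 = true then (1 : ℝ) else 0) | Fminus])
    (n : ℕ) :
    ∫ y, (∑ k ∈ Finset.range n, Gfun k y)^2 ∂μ ≤ n := by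
  have hexpand : ∀ y, (∑ k ∈ Finset.range n, Gfun k y)^2
      = ∑ j ∈ Finset.range n, ∑ k ∈ Finset.range n, Gfun j y * Gfun k y := by
    intro y
    rw [pow_two, Finset.sum_mul_sum]
  have hint : ∫ y, (∑ k ∈ Finset.range n, Gfun k y)^2 ∂μ
      = ∑ j ∈ Finset.range n, ∑ k ∈ Finset.range n, ∫ y, Gfun j y * Gfun k y ∂μ := by
    rw [integral_congr_ae (ae_of_all _ hexpand)]
    rw [integral_finset_sum _ (fun j _ => integrable_finset_sum _ (fun k _ => integrable_GG j k))]
    congr 1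
    funext j
    rw [integral_finset_sum _ (fun k _ => integrable_GG j k)]
  rw [hint]
  have hterm : ∀ j ∈ Finset.range n, (∑ k ∈ Finset.range n, ∫ y, Gfun j y * Gfun k y ∂μ) ≤ 1 := by
    intro j hj
    have hsum : (∑ k ∈ Finset.range n, ∫ y, Gfun j y * Gfun k y ∂μ)
        = ∫ y, Gfun j y * Gfun j y ∂μ := by
      apply Finset.sum_eq_single_of_mem j hj
      intro k _ hkj
      rcases lt_or_gt_of_ne hkj with hlt | hgt
      · rw [show (fun y => Gfun j y * Gfun k y) = (fun y => Gfun k y * Gfun j y) from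
          funext (fun y => mul_comm _ _)]
        exact orth hshift hcomp hlt
      · exact orth hshift hcomp hgt
    rw [hsum]
    calc ∫ y, Gfun j y * Gfun j y ∂μ ≤ ∫ _, (1:ℝ) ∂μ := by
          apply integral_mono (integrable_GG j j) (integrable_const 1)
          intro y
          have h1 := Gfun_bound j y
          show Gfun j y * Gfun j y ≤ 1
          nlinarith [abs_nonneg (Gfun j y), sq_abs (Gfun j y), abs_mul_abs_self (Gfun j y)]
      _ = 1 := by simp
  calc (∑ j ∈ Finset.range n, ∑ k ∈ Finset.range n, ∫ y, Gfun j y * Gfun k y ∂μ)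
      ≤ ∑ j ∈ Finset.range n, 1 := Finset.sum_le_sum hterm
    _ = n := by simp

noncomputable def Dn (n : ℕ) (y : ℤ → Bool) : ℝ := (∑ k ∈ Finset.range n, Gfun k y) / n

lemma measurable_Dn (n : ℕ) : Measurable (Dn n) := by
  apply Measurable.div_const
  exact Finset.measurable_sum _ (fun k _ => measurable_Gfun k)

lemma Dn_bound (n : ℕ) (y : ℤ → Bool) : |Dn n y| ≤ 1 := by
  rcases Nat.eq_zero_or_pos n with h | h
  · simp [Dn, h]
  · rw [Dn, abs_div]
    rw [div_le_one (by positivity : (0:ℝ) < |(n:ℝ)|)]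
    calc |∑ k ∈ Finset.range n, Gfun k y| ≤ ∑ k ∈ Finset.range n, |Gfun k y| :=
          Finset.abs_sum_le_sum_abs _ _
      _ ≤ ∑ k ∈ Finset.range n, 1 := Finset.sum_le_sum (fun k _ => Gfun_bound k y)
      _ = n := by simp
      _ ≤ |(n:ℝ)| := le_abs_self _

lemma Dn_sq_integral (hshift : μ.map shiftZ = μ)
    (hcomp : (fun y => ghat (_root_.negPart y) true)
      =ᵐ[μ] μ[(fun y => if y 0 = true then (1 : ℝ) else 0) | Fminus])
    {n : ℕ} (hn : 1 ≤ n) :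
    ∫ y, (Dn n y)^2 ∂μ ≤ 1 / n := by
  have hnr : (0:ℝ) < n := by exact_mod_cast hn
  have heq : ∀ y, (Dn n y)^2 = (∑ k ∈ Finset.range n, Gfun k y)^2 / (n^2 : ℝ) := by
    intro y; rw [Dn, div_pow]
  rw [integral_congr_ae (ae_of_all _ heq), integral_div]
  rw [div_le_div_iff₀ (by positivity) hnr]
  calc (∫ y, (∑ k ∈ Finset.range n, Gfun k y)^2 ∂μ) * n ≤ n * n := by
        have := second_moment hshift hcomp n
        nlinarith
    _ = 1 * (n:ℝ)^2 := by ring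

lemma Dn_sq_integrable (n : ℕ) : Integrable (fun y => (Dn n y)^2) μ := by
  apply integrable_of_bdd ((measurable_Dn n).pow_const 2) 1
  intro y
  have h1 := Dn_bound n y
  have h2 := abs_nonneg (Dn n y)
  calc |(Dn n y)^2| = |Dn n y|^2 := by rw [sq_abs, abs_of_nonneg (sq_nonneg _)]
    _ ≤ 1 := by nlinarith

lemma ae_summable (hshift : μ.map shiftZ = μ)
    (hcomp : (fun y => ghat (_root_.negPart y) true)
      =ᵐ[μ] μ[(fun y => if y 0 = true then (1 : ℝ) else 0) | Fminus]) :
    ∀ᵐ y ∂μ, Summable (fun m : ℕ => (Dn ((m+1)*(m+1)) y)^2) := by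
  set g : ℕ → (ℤ → Bool) → ENNReal := fun m y => ENNReal.ofReal ((Dn ((m+1)*(m+1)) y)^2) with hg
  have hgmeas : ∀ m, Measurable (g m) := by
    intro m
    exact ENNReal.measurable_ofReal.comp ((measurable_Dn _).pow_const 2)
  have hbound : ∀ m : ℕ, ∫⁻ y, g m y ∂μ ≤ ENNReal.ofReal (1 / (((m+1)*(m+1) : ℕ) : ℝ)) := by
    intro m
    rw [hg]
    simp only
    rw [← ofReal_integral_eq_lintegral_ofReal (Dn_sq_integrable _) (ae_of_all _ (fun y => sq_nonneg _))]
    apply ENNReal.ofReal_le_ofReal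
    exact Dn_sq_integral hshift hcomp (Nat.mul_pos m.succ_pos m.succ_pos)
  have hsummable : Summable (fun m : ℕ => 1 / (((m+1)*(m+1) : ℕ) : ℝ)) := by
    have h2 : Summable (fun n : ℕ => 1 / ((n:ℝ))^2) :=
      Real.summable_one_div_nat_pow.mpr one_lt_two
    have h3 := (summable_nat_add_iff 1).mpr h2
    apply h3.congr
    intro m
    push_cast
    ring
  have htsum : (∑' m : ℕ, ∫⁻ y, g m y ∂μ) < ⊤ := by
    calc (∑' m : ℕ, ∫⁻ y, g m y ∂μ)
        ≤ ∑' m : ℕ, ENNReal.ofReal (1 / (((m+1)*(m+1) : ℕ) : ℝ)) := ENNReal.tsum_le_tsum hbound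
      _ = ENNReal.ofReal (∑' m : ℕ, 1 / (((m+1)*(m+1) : ℕ) : ℝ)) :=
          (ENNReal.ofReal_tsum_of_nonneg (fun m => by positivity) hsummable).symm
      _ < ⊤ := ENNReal.ofReal_lt_top
  have hlint : ∫⁻ y, (∑' m : ℕ, g m y) ∂μ < ⊤ := by
    rw [lintegral_tsum (fun m => (hgmeas m).aemeasurable)]
    exact htsum
  have hae : ∀ᵐ y ∂μ, (∑' m : ℕ, g m y) < ⊤ :=
    ae_lt_top (Measurable.ennreal_tsum hgmeas) hlint.ne
  filter_upwards [hae] with y hy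
  have hsum := ENNReal.summable_toReal hy.ne
  apply hsum.congr
  intro m
  rw [hg]
  simp only
  rw [ENNReal.toReal_ofReal (sq_nonneg _)]

lemma ae_tendsto_avg (hshift : μ.map shiftZ = μ)
    (hcomp : (fun y => ghat (_root_.negPart y) true)
      =ᵐ[μ] μ[(fun y => if y 0 = true then (1 : ℝ) else 0) | Fminus]) :
    ∀ᵐ y ∂μ, Tendsto (fun n : ℕ =>
        (∑ i ∈ Finset.range n, (if _root_.negPart y i then (1 : ℝ) else 0)) / n)
      atTop (nhds (cfun y)) := by
  filter_upwards [ae_summable hshift hcomp] with y hy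
  -- 1. Dn along squares tends to 0
  have h1 : Tendsto (fun m : ℕ => (Dn ((m+1)*(m+1)) y)^2) atTop (nhds 0) :=
    hy.tendsto_atTop_zero
  have h2 : Tendsto (fun m : ℕ => |Dn ((m+1)*(m+1)) y|) atTop (nhds 0) := by
    have h3 := (Real.continuous_sqrt.tendsto 0).comp h1
    simp only [Function.comp_def, Real.sqrt_sq_eq_abs, Real.sqrt_zero] at h3
    exact h3
  have h4 : Tendsto (fun m : ℕ => Dn ((m+1)*(m+1)) y) atTop (nhds 0) :=
    (tendsto_zero_iff_abs_tendsto_zero _).mpr h2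
  -- 2. avg along squares tends to cfun y
  set v : ℕ → ℝ := fun k => if _root_.negPart y k then (1:ℝ) else 0 with hv
  have hsumG : ∀ n : ℕ, (∑ k ∈ Finset.range n, Gfun k y)
      = (∑ k ∈ Finset.range n, v k) - n * cfun y := by
    intro n
    rw [hv]
    simp only [Gfun]
    rw [Finset.sum_sub_distrib]
    congr 1
    rw [Finset.sum_const, Finset.card_range, nsmul_eq_mul]
  have havg : ∀ n : ℕ, 1 ≤ n → (∑ k ∈ Finset.range n, v k) / n = Dn n y + cfun y := by
    intro n hn
    have hnr : (0:ℝ) < n := by exact_mod_cast hn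
    rw [Dn, hsumG, sub_div, mul_comm, mul_div_assoc, div_self (ne_of_gt hnr), mul_one]
    ring
  have h5 : Tendsto (fun m : ℕ => (∑ k ∈ Finset.range ((m+1)*(m+1)), v k) / (((m+1)*(m+1) : ℕ) : ℝ))
      atTop (nhds (cfun y)) := by
    have h6 : Tendsto (fun m : ℕ => Dn ((m+1)*(m+1)) y + cfun y) atTop (nhds (0 + cfun y)) :=
      h4.add tendsto_const_nhds
    rw [zero_add] at h6
    apply h6.congr'
    filter_upwards [] with m
    rw [havg _ (Nat.mul_pos m.succ_pos m.succ_pos)]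
  -- 3. shift index: m+1 squares to m squares
  have h7 : Tendsto (fun m : ℕ => (∑ k ∈ Finset.range (m*m), v k) / ((m*m : ℕ) : ℝ))
      atTop (nhds (cfun y)) := by
    rw [← tendsto_add_atTop_iff_nat 1]
    exact h5
  -- 4. interpolate
  have h8 := cesaro_of_squares v (fun k => by rw [hv]; simp only; split <;> norm_num)
      (fun k => by rw [hv]; simp only; split <;> norm_num) (cfun y) h7
  exact h8

end Meas

/-- There is no shift-invariant probability measure compatible with `ĝ`, even though
`inf ĝ = 0.3 > 0`. -/
theorem no_stationary_measure_for_ghat :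
    ¬ ∃ μ : Measure (ℤ → Bool), IsProbabilityMeasure μ ∧
        μ.map shiftZ = μ ∧
        ∀ a : Bool,
          (fun y => ghat (negPart y) a)
            =ᵐ[μ] μ[(fun y => if y 0 = a then (1 : ℝ) else 0) | Fminus] := by
  rintro ⟨μ, hprob, hshift, hcomp⟩
  have hc := hcomp true
  have hae := ae_tendsto_avg (μ := μ) hshift hc
  have hfalse : ∀ᵐ y ∂μ, False := by
    filter_upwards [hae] with y hy
    have hlimsup : limsup (fun n : ℕ =>
        (∑ i ∈ Finset.range n, (if _root_.negPart y i then (1 : ℝ) else 0)) / n) atTop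
        = cfun y := hy.limsup_eq
    by_cases hmem : _root_.negPart y ∈ XgtHalf
    · have h1 : cfun y = 0.3 := by rw [cfun, if_pos hmem]
      have h2 : (1:ℝ)/2 < limsup (fun n : ℕ =>
          (∑ i ∈ Finset.range n, (if _root_.negPart y i then (1 : ℝ) else 0)) / n) atTop := hmem
      rw [hlimsup, h1] at h2
      norm_num at h2
    · have h1 : cfun y = 0.7 := by rw [cfun, if_neg hmem]
      have h2 : ¬ ((1:ℝ)/2 < limsup (fun n : ℕ =>
          (∑ i ∈ Finset.range n, (if _root_.negPart y i then (1 : ℝ) else 0)) / n) atTop) := hmem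
      rw [hlimsup, h1] at h2
      norm_num at h2
  have hbot : μ = 0 := by
    have := Filter.eventually_false_iff_eq_bot.mp hfalse
    exact MeasureTheory.ae_eq_bot.mp this
  have huniv : μ Set.univ = 1 := measure_univ
  rw [hbot] at huniv
  simp at huniv
end

section
/- Let g = (τ, p) be a probabilistic context tree on finite alphabet A with g ≥ ε > 0, and suppose the upper exponential growth of the context tree satisfies limsup_n |τ^n|^{1/n} < (1 − (|A|−1)ε)^{-1}, where τ^n = {y_{-n}^{-1} : ℓ(ȳ) > n}. Then for every past x̄, Σ_{i≥1} μ^{x̄}({y : ℓ(y_0^{i-1}) > i}) < ∞, with the bound uniform in x̄: there exist α ∈ (0,1) and N such that for i > N the i-th summand is at most (1 − (|A|−1)ε)^{iα}. -/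
open MeasureTheory Filter ENNReal

/-- Prefix cylinder in `A^ℕ`. -/
def prefixCyl {A : Type*} (w : List A) : Set (ℕ → A) :=
  {y | ∀ i : Fin w.length, y (i : ℕ) = w.get i}

/-- The variation of order `n` of `g` at the past `y`. -/
noncomputable def varg {A : Type*} (g : (ℕ → A) → A → ℝ) (n : ℕ) (y : ℕ → A) : ℝ :=
  ⨆ a : A, ⨆ z : {z : ℕ → A // ∀ i < n, z i = y i}, |g z.1 a - g y a|

/-- The context length function `ℓ(ȳ) = inf{k ≥ 1 : var_k(ȳ) = 0} ∈ ℕ∞`. -/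
noncomputable def ellg {A : Type*} (g : (ℕ → A) → A → ℝ) (y : ℕ → A) : ℕ∞ :=
  sInf {e : ℕ∞ | ∃ k : ℕ, e = (k : ℕ∞) ∧ 1 ≤ k ∧ varg g k y = 0}

/-- The set `τ^i` of length-`i` suffixes of contexts, i.e. strings `y_{-i}^{-1}`
with `ℓ(ȳ) > i`, here as the event `{y : ℓ(y_0^{i-1}) > i}` in `A^ℕ` (the string
`y_0^{i-1}` is read backwards as a past). -/
def badSet {A : Type*} (g : (ℕ → A) → A → ℝ) (i : ℕ) : Set (ℕ → A) :=
  {y | ∃ z : ℕ → A, (∀ j : ℕ, j < i → z j = y (i - 1 - j)) ∧ (i : ℕ∞) < ellg g z}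


section Aux
variable {A : Type*} [Fintype A] [Nonempty A]

lemma g_le_r (g : (ℕ → A) → A → ℝ) (ε : ℝ)
    (hg : ∀ x a, ε ≤ g x a) (hsum : ∀ x, ∑ a, g x a = 1)
    (x : ℕ → A) (a : A) : g x a ≤ 1 - ((Fintype.card A : ℝ) - 1) * ε := by
  classical
  have h1 : ∑ b ∈ Finset.univ.erase a, g x b + g x a = 1 := by
    rw [Finset.sum_erase_add _ _ (Finset.mem_univ a)]; exact hsum x
  have h2 : ((Finset.univ.erase a).card : ℝ) * ε ≤ ∑ b ∈ Finset.univ.erase a, g x b := by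
    have := Finset.card_nsmul_le_sum (Finset.univ.erase a) (g x) ε (fun b _ => hg x b)
    simpa [nsmul_eq_mul] using this
  have hcard : ((Finset.univ.erase a).card : ℝ) = (Fintype.card A : ℝ) - 1 := by
    rw [Finset.card_erase_of_mem (Finset.mem_univ a), Finset.card_univ]
    have h1c : 1 ≤ Fintype.card A := Fintype.card_pos
    push_cast [h1c]
    ring
  rw [hcard] at h2
  linarith

lemma gprod_nonneg_s15 (g : (ℕ → A) → A → ℝ) (ε : ℝ) (hε : 0 < ε)
    (hg : ∀ x a, ε ≤ g x a) (x : ℕ → A) (w : List A) : 0 ≤ gprod g x w :=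
  Finset.prod_nonneg fun i _ => le_trans hε.le (hg _ _)

lemma gprod_le (g : (ℕ → A) → A → ℝ) (ε : ℝ) (hε : 0 < ε)
    (hg : ∀ x a, ε ≤ g x a) (hsum : ∀ x, ∑ a, g x a = 1) (x : ℕ → A) (w : List A) :
    gprod g x w ≤ (1 - ((Fintype.card A : ℝ) - 1) * ε) ^ w.length := by
  unfold gprod
  calc ∏ i : Fin w.length, g (concatPast x (w.take i.val)) (w.get i)
      ≤ ∏ _i : Fin w.length, (1 - ((Fintype.card A : ℝ) - 1) * ε) :=
        Finset.prod_le_prod (fun i _ => le_trans hε.le (hg _ _))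
          (fun i _ => g_le_r g ε hg hsum _ _)
    _ = (1 - ((Fintype.card A : ℝ) - 1) * ε) ^ w.length := by
        simp

lemma prefixCyl_nil : prefixCyl ([] : List A) = Set.univ := by
  ext y; simp only [prefixCyl, Set.mem_setOf_eq, Set.mem_univ, iff_true]
  exact fun i => i.elim0

lemma gprod_nil (g : (ℕ → A) → A → ℝ) (x : ℕ → A) : gprod g x ([] : List A) = 1 := by
  simp [gprod]

end Aux
lemma measure_badSet_le {A : Type*} [Fintype A] [Nonempty A] [MeasurableSpace A]
    (g : (ℕ → A) → A → ℝ) (ε : ℝ) (hε : 0 < ε)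
    (hg : ∀ x a, ε ≤ g x a) (hsum : ∀ x, ∑ a, g x a = 1)
    (ν : (ℕ → A) → Measure (ℕ → A))
    (hν : ∀ (x : ℕ → A) (w : List A), ν x (prefixCyl w) = ENNReal.ofReal (gprod g x w))
    (x : ℕ → A) (i : ℕ) :
    ν x (badSet g i) ≤ ENNReal.ofReal
      ((Set.ncard {w : Fin i → A |
          ∃ y : ℕ → A, (∀ j : Fin i, y j = w j) ∧ (i : ℕ∞) < ellg g y} : ℝ)
        * (1 - ((Fintype.card A : ℝ) - 1) * ε) ^ i) := by
  classical
  set r : ℝ := 1 - ((Fintype.card A : ℝ) - 1) * ε with hrdef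
  set T : Set (Fin i → A) :=
    {w | ∃ y : ℕ → A, (∀ j : Fin i, y j = w j) ∧ (i : ℕ∞) < ellg g y} with hT
  have hfin : T.Finite := Set.toFinite T
  have hr0 : 0 < r := by
    have := hg (fun _ => Classical.arbitrary A) (Classical.arbitrary A)
    have := g_le_r g ε hg hsum (fun _ => Classical.arbitrary A) (Classical.arbitrary A)
    linarith
  have hcover : badSet g i ⊆ ⋃ w ∈ hfin.toFinset, prefixCyl ((List.ofFn w).reverse) := by
    rintro y ⟨z, hz, hℓ⟩
    refine Set.mem_biUnion (?_ : (fun j : Fin i => z j) ∈ hfin.toFinset) ?_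
    · rw [Set.Finite.mem_toFinset]
      exact ⟨z, fun j => rfl, hℓ⟩
    · intro j
      have hj : (j : ℕ) < i := by
        have := j.2; simpa using this
      have h1 := hz (i - 1 - (j : ℕ)) (by omega)
      have h2 : i - 1 - (i - 1 - (j : ℕ)) = (j : ℕ) := by omega
      rw [h2] at h1
      simp only [List.get_eq_getElem, List.getElem_reverse, List.getElem_ofFn,
        List.length_ofFn]
      exact h1.symm
  calc ν x (badSet g i)
      ≤ ν x (⋃ w ∈ hfin.toFinset, prefixCyl ((List.ofFn w).reverse)) := measure_mono hcover
    _ ≤ ∑ w ∈ hfin.toFinset, ν x (prefixCyl ((List.ofFn w).reverse)) :=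
        measure_biUnion_finset_le _ _
    _ ≤ ∑ _w ∈ hfin.toFinset, ENNReal.ofReal (r ^ i) := by
        refine Finset.sum_le_sum fun w _ => ?_
        rw [hν]
        refine ENNReal.ofReal_le_ofReal ?_
        have := gprod_le g ε hε hg hsum x ((List.ofFn w).reverse)
        simpa using this
    _ = (hfin.toFinset.card : ℝ≥0∞) * ENNReal.ofReal (r ^ i) := by
        rw [Finset.sum_const, nsmul_eq_mul]
    _ = ENNReal.ofReal ((T.ncard : ℝ) * r ^ i) := by
        rw [ENNReal.ofReal_mul (Nat.cast_nonneg _), ENNReal.ofReal_natCast,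
          Set.ncard_eq_toFinset_card _ hfin]

/-- If `g ≥ ε > 0` and the upper exponential growth of the context tree is smaller
than `(1 − (|A|−1)ε)^{-1}`, then `Σ_i μ^{x̄}(ℓ(y_0^{i-1}) > i) < ∞` uniformly in the
past `x̄`, with summands eventually bounded by `(1 − (|A|−1)ε)^{iα}`. -/
theorem growth_implies_summable_context_tails
    {A : Type*} [Fintype A] [Nonempty A] [MeasurableSpace A] [MeasurableSingletonClass A]
    (g : (ℕ → A) → A → ℝ) (ε : ℝ) (hε : 0 < ε)
    (hg : ∀ x a, ε ≤ g x a) (hsum : ∀ x, ∑ a, g x a = 1)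
    (hgr : Filter.limsup (fun n : ℕ =>
        ((Set.ncard {w : Fin n → A |
            ∃ y : ℕ → A, (∀ i : Fin n, y i = w i) ∧ (n : ℕ∞) < ellg g y} : ℝ))
          ^ (1 / (n : ℝ))) atTop
      < (1 - ((Fintype.card A : ℝ) - 1) * ε)⁻¹)
    (ν : (ℕ → A) → Measure (ℕ → A))
    (hν : ∀ (x : ℕ → A) (w : List A),
      ν x (prefixCyl w) = ENNReal.ofReal (gprod g x w)) :
    (∀ x : ℕ → A, ∑' i : ℕ, ν x (badSet g i) ≠ ⊤) ∧
    ∃ α ∈ Set.Ioo (0 : ℝ) 1, ∃ N : ℕ, ∀ i : ℕ, N < i → ∀ x : ℕ → A,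
      ν x (badSet g i)
        ≤ ENNReal.ofReal ((1 - ((Fintype.card A : ℝ) - 1) * ε) ^ ((i : ℝ) * α)) := by
  classical
  set r : ℝ := 1 - ((Fintype.card A : ℝ) - 1) * ε with hrdef
  set u : ℕ → ℝ := fun n =>
    ((Set.ncard {w : Fin n → A |
        ∃ y : ℕ → A, (∀ i : Fin n, y i = w i) ∧ (n : ℕ∞) < ellg g y} : ℝ))
      ^ (1 / (n : ℝ)) with hudef
  set L : ℝ := Filter.limsup u atTop with hLdef
  have hgr' : L < r⁻¹ := hgr
  have hr0 : 0 < r := by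
    have := hg (fun _ => Classical.arbitrary A) (Classical.arbitrary A)
    have := g_le_r g ε hg hsum (fun _ => Classical.arbitrary A) (Classical.arbitrary A)
    linarith
  have hr1 : r ≤ 1 := by
    have h1c : (1 : ℝ) ≤ Fintype.card A := by exact_mod_cast (Fintype.card_pos : 0 < Fintype.card A)
    have : 0 ≤ ((Fintype.card A : ℝ) - 1) * ε := mul_nonneg (by linarith) hε.le
    rw [hrdef]; linarith
  -- every ν x is a probability-like measure on these sets
  have hle1 : ∀ (x : ℕ → A) (s : Set (ℕ → A)), ν x s ≤ 1 := by
    intro x s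
    have huniv : ν x Set.univ = 1 := by
      rw [← prefixCyl_nil, hν, gprod_nil, ENNReal.ofReal_one]
    calc ν x s ≤ ν x Set.univ := measure_mono (Set.subset_univ s)
      _ = 1 := huniv
  -- boundedness of u
  have hbd : ∀ n : ℕ, u n ≤ (Fintype.card A : ℝ) := by
    intro n
    have h1c : (1 : ℝ) ≤ Fintype.card A := by exact_mod_cast (Fintype.card_pos : 0 < Fintype.card A)
    rcases Nat.eq_zero_or_pos n with h0 | h1
    · subst h0
      have hu0 : u 0 = 1 := by simp [hudef]
      rw [hu0]; linarith
    · have hsub : (Set.ncard {w : Fin n → A |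
          ∃ y : ℕ → A, (∀ i : Fin n, y i = w i) ∧ (n : ℕ∞) < ellg g y} : ℝ)
          ≤ (Fintype.card A : ℝ) ^ n := by
        have h := Set.ncard_le_ncard (Set.subset_univ {w : Fin n → A |
          ∃ y : ℕ → A, (∀ i : Fin n, y i = w i) ∧ (n : ℕ∞) < ellg g y}) (Set.finite_univ)
        rw [Set.ncard_univ, Nat.card_eq_fintype_card] at h
        have : Fintype.card (Fin n → A) = Fintype.card A ^ n := by
          simp [Fintype.card_fun]
        rw [this] at h
        exact_mod_cast h
      calc u n ≤ ((Fintype.card A : ℝ) ^ n) ^ (1 / (n : ℝ)) :=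
            Real.rpow_le_rpow (Nat.cast_nonneg _) hsub (by positivity)
        _ = (Fintype.card A : ℝ) := by
            rw [← Real.rpow_natCast (Fintype.card A : ℝ) n, ← Real.rpow_mul (by positivity),
              mul_one_div_cancel (by exact_mod_cast h1.ne' : (n : ℝ) ≠ 0), Real.rpow_one]
  -- main: from L < c get eventual geometric bound
  have main : ∀ c : ℝ, L < c →
      ∃ N : ℕ, ∀ i : ℕ, N < i → ∀ x : ℕ → A,
        ν x (badSet g i) ≤ ENNReal.ofReal ((c * r) ^ i) := by
    intro c hcL
    have hev : ∀ᶠ n in atTop, u n < c :=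
      eventually_lt_of_limsup_lt hcL (isBoundedUnder_of ⟨(Fintype.card A : ℝ), hbd⟩)
    obtain ⟨N, hN⟩ := eventually_atTop.mp hev
    refine ⟨N + 1, fun i hi x => ?_⟩
    have hi1 : 1 ≤ i := by omega
    set m : ℝ := (Set.ncard {w : Fin i → A |
        ∃ y : ℕ → A, (∀ j : Fin i, y j = w j) ∧ (i : ℕ∞) < ellg g y} : ℝ) with hmdef
    have hm0 : 0 ≤ m := Nat.cast_nonneg _
    have hui : u i < c := hN i (by omega)
    have hc0 : 0 ≤ c := le_trans (Real.rpow_nonneg hm0 _) hui.le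
    have hmc : m ≤ c ^ i := by
      have hstep : (m ^ (1 / (i : ℝ))) ^ (i : ℝ) ≤ c ^ (i : ℝ) :=
        Real.rpow_le_rpow (Real.rpow_nonneg hm0 _) hui.le (Nat.cast_nonneg i)
      have hid : (m ^ (1 / (i : ℝ))) ^ (i : ℝ) = m := by
        rw [← Real.rpow_mul hm0, one_div_mul_cancel
          (by positivity : (i : ℝ) ≠ 0), Real.rpow_one]
      rw [← Real.rpow_natCast c i, ← hid]
      exact hstep
    have hkey := measure_badSet_le g ε hε hg hsum ν hν x i
    refine le_trans hkey (ENNReal.ofReal_le_ofReal ?_)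
    rw [mul_pow]
    exact mul_le_mul_of_nonneg_right hmc (pow_nonneg hr0.le i)
  -- summability helper
  have tsum_aux : ∀ q : ℝ, 0 ≤ q → q < 1 → ∀ N : ℕ,
      (∀ i : ℕ, N < i → ∀ x : ℕ → A, ν x (badSet g i) ≤ ENNReal.ofReal (q ^ i)) →
      ∀ x : ℕ → A, ∑' i : ℕ, ν x (badSet g i) ≠ ⊤ := by
    intro q hq0 hq1 N hb x
    have hgeo : ∑' i : ℕ, ENNReal.ofReal (q ^ i) ≠ ⊤ := by
      rw [← ENNReal.ofReal_tsum_of_nonneg (fun i => pow_nonneg hq0 i)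
        (summable_geometric_of_lt_one hq0 hq1)]
      exact ENNReal.ofReal_ne_top
    rw [← Summable.sum_add_tsum_nat_add' (f := fun i => ν x (badSet g i)) (k := N + 1)
      ENNReal.summable]
    refine ENNReal.add_ne_top.2 ⟨?_, ?_⟩
    · refine (lt_of_le_of_lt (Finset.sum_le_sum fun i _ => hle1 x (badSet g i)) ?_).ne
      simp
    · refine ne_top_of_le_ne_top hgeo ?_
      calc ∑' i : ℕ, ν x (badSet g (i + (N + 1)))
          ≤ ∑' i : ℕ, ENNReal.ofReal (q ^ (i + (N + 1))) :=
            ENNReal.tsum_le_tsum fun i => hb _ (by omega) x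
        _ ≤ ∑' i : ℕ, ENNReal.ofReal (q ^ i) :=
            ENNReal.tsum_le_tsum fun i => ENNReal.ofReal_le_ofReal
              (pow_le_pow_of_le_one hq0 hq1.le (by omega))
  rcases lt_or_eq_of_le hr1 with hrlt | hreq
  · -- r < 1
    have h1r : 1 < r⁻¹ := one_lt_inv₀ hr0 |>.mpr hrlt
    set c : ℝ := (max L 1 + r⁻¹) / 2 with hcdef
    have hmax : max L 1 < r⁻¹ := max_lt hgr' h1r
    have hc1 : 1 < c := by
      have := le_max_right L 1; rw [hcdef]; linarith
    have hcL : L < c := by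
      have := le_max_left L 1; rw [hcdef]; linarith
    have hcr : c < r⁻¹ := by rw [hcdef]; linarith
    have hcr1 : c * r < 1 := by
      have := mul_lt_mul_of_pos_right hcr hr0
      rwa [inv_mul_cancel₀ hr0.ne'] at this
    have hcr0 : 0 < c * r := mul_pos (by linarith) hr0
    obtain ⟨N, hN⟩ := main c hcL
    refine ⟨tsum_aux (c * r) hcr0.le hcr1 N hN, ?_⟩
    set α : ℝ := Real.log (c * r) / Real.log r with hadef
    have hlogr : Real.log r < 0 := Real.log_neg hr0 hrlt
    have hlogcr : Real.log (c * r) < 0 := Real.log_neg hcr0 hcr1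
    have hα0 : 0 < α := div_pos_of_neg_of_neg hlogcr hlogr
    have hα1 : α < 1 := by
      have hlt : Real.log r < Real.log (c * r) :=
        Real.log_lt_log hr0 (by nlinarith)
      rw [hadef, div_lt_one_of_neg hlogr]
      exact hlt
    refine ⟨α, ⟨hα0, hα1⟩, N, fun i hi x => ?_⟩
    have hEq : r ^ ((i : ℝ) * α) = (c * r) ^ i := by
      rw [Real.rpow_def_of_pos hr0]
      have harg : Real.log r * ((i : ℝ) * α) = Real.log (c * r) * (i : ℝ) := by
        rw [hadef]; field_simp [hlogr.ne]
      rw [harg, ← Real.rpow_def_of_pos hcr0, Real.rpow_natCast]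
    rw [hEq]
    exact hN i hi x
  · -- r = 1
    have hL1 : L < 1 := by rw [hreq] at hgr'; simpa using hgr'
    set c : ℝ := (max L 0 + 1) / 2 with hcdef
    have hmax : max L 0 < 1 := max_lt hL1 one_pos
    have hc0 : 0 < c := by
      have := le_max_right L 0; rw [hcdef]; linarith
    have hc1 : c < 1 := by rw [hcdef]; linarith
    have hcL : L < c := by
      have := le_max_left L 0; rw [hcdef]; linarith
    obtain ⟨N, hN⟩ := main c hcL
    have hN' : ∀ i : ℕ, N < i → ∀ x : ℕ → A,
        ν x (badSet g i) ≤ ENNReal.ofReal (c ^ i) := by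
      intro i hi x
      have := hN i hi x
      rwa [hreq, mul_one] at this
    refine ⟨tsum_aux c hc0.le hc1 N hN', ?_⟩
    refine ⟨1/2, ⟨by norm_num, by norm_num⟩, N, fun i hi x => ?_⟩
    rw [hreq, Real.one_rpow, ENNReal.ofReal_one]
    exact hle1 x _
end

section
/- Let ν be the image of the Bernoulli(ε)-product measure under the pair-product map (as in Furstenberg's example) on A = {−1,+1}, ε ≠ 1/2. Let G be the set of one-sided configurations y such that at least one of the two F-preimages x^±(y) has density of −1 equal to ε. Then ν(G) = 1, and for ν-a.e. y with y_0 = +1, the conditional probabilities ν(y_0 | y_{-n}^{-1}) converge: the limit is 1 − ε if the preimage x^+(y) has density ε of −1's, and ε if x^-(y) has density ε of −1's. -/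
open MeasureTheory Filter Topology

/-- The preimage `x⁺(y)` has density `ε` of `−1`'s. -/
def densPlus (y : ℤ → ℤˣ) (ε : ℝ) : Prop :=
  Tendsto (fun n : ℕ =>
      (((Finset.Icc 1 n).filter (fun k => xplus y k = -1)).card : ℝ) / n)
    atTop (𝓝 ε)

/-- The preimage `x⁻(y) = −x⁺(y)` has density `ε` of `−1`'s. -/
def densMinus (y : ℤ → ℤˣ) (ε : ℝ) : Prop :=
  Tendsto (fun n : ℕ =>
      (((Finset.Icc 1 n).filter (fun k => xplus y k = 1)).card : ℝ) / n)
    atTop (𝓝 ε)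

set_option linter.unusedSectionVars false
section
namespace Furst
open scoped Classical

lemma u_mul_self (u : ℤˣ) : u * u = 1 := Int.units_mul_self u

lemma units_ne_neg (u : ℤˣ) : u ≠ -u := by
  rcases Int.units_eq_one_or u with rfl | rfl <;> decide

lemma eq_mul_of_mul_eq {a b c : ℤˣ} (h : a * b = c) : a = c * b := by
  rw [← h, mul_assoc, u_mul_self, mul_one]

lemma measurable_pairProd : Measurable pairProd := by
  refine measurable_pi_lambda _ fun i => ?_
  have h1 : Measurable fun x : ℤ → ℤˣ => x (i-1) := measurable_pi_apply _
  have h2 : Measurable fun x : ℤ → ℤˣ => x i := measurable_pi_apply _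
  have hm : Measurable fun p : ℤˣ × ℤˣ => p.1 * p.2 := Measurable.of_discrete
  exact hm.comp (h1.prodMk h2)

lemma xplus_zero (y : ℤ → ℤˣ) : xplus y 0 = 1 := by simp [xplus]

lemma xplus_succ (y : ℤ → ℤˣ) (k : ℕ) : xplus y (k+1) = xplus y k * y (-(k:ℤ)) := by
  simp [xplus, Finset.prod_range_succ]

lemma xplus_one (y : ℤ → ℤˣ) : xplus y 1 = y 0 := by
  rw [show (1:ℕ) = 0 + 1 from rfl, xplus_succ, xplus_zero, one_mul]; norm_num

lemma xplus_pairProd (x : ℤ → ℤˣ) (k : ℕ) :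
    xplus (pairProd x) k = x 0 * x (-(k:ℤ)) := by
  induction k with
  | zero => simp [xplus_zero, u_mul_self]
  | succ k ih =>
    rw [xplus_succ, ih]
    show x 0 * x (-(k:ℤ)) * (x (-(k:ℤ) - 1) * x (-(k:ℤ))) = _
    have h1 : (-(k+1:ℕ):ℤ) = -(k:ℤ) - 1 := by push_cast; ring
    rw [h1]
    rw [mul_mul_mul_comm, u_mul_self, mul_one]

lemma measurableSet_coord (i : ℤ) (u : ℤˣ) : MeasurableSet {x : ℤ → ℤˣ | x i = u} := by
  have : {x : ℤ → ℤˣ | x i = u} = (fun x : ℤ → ℤˣ => x i) ⁻¹' {u} := rfl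
  rw [this]
  exact measurable_pi_apply i (MeasurableSpace.measurableSet_top)

lemma measurableSet_window (s : Finset ℕ) (v : ℕ → ℤˣ) :
    MeasurableSet {x : ℤ → ℤˣ | ∀ k ∈ s, x (-(k:ℤ)) = v k} := by
  have : {x : ℤ → ℤˣ | ∀ k ∈ s, x (-(k:ℤ)) = v k}
      = ⋂ k ∈ (s : Set ℕ), {x : ℤ → ℤˣ | x (-(k:ℤ)) = v k} := by ext x; simp
  rw [this]
  exact MeasurableSet.biInter (s : Set ℕ).to_countable fun k _ => measurableSet_coord _ _

lemma measurableSet_cylIcc (a b : ℤ) (y : ℤ → ℤˣ) : MeasurableSet (cylIcc a b y) := by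
  have : cylIcc a b y = ⋂ i ∈ Set.Icc a b, {z : ℤ → ℤˣ | z i = y i} := by
    ext z; simp only [cylIcc, Set.mem_setOf_eq, Set.mem_iInter, Set.mem_Icc, and_imp]
  rw [this]
  exact MeasurableSet.biInter (Set.Icc a b).to_countable fun i _ => measurableSet_coord _ _



lemma telescope_num {y x : ℤ → ℤˣ} {n : ℕ}
    (h : ∀ i : ℤ, -(n:ℤ) ≤ i → i ≤ 0 → x (i-1) * x i = y i) :
    ∀ k ≤ n+1, x (-(k:ℤ)) = x 0 * xplus y k := by
  intro k
  induction k with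
  | zero => intro _; simp [xplus_zero]
  | succ k ih =>
    intro hk
    have hc := h (-(k:ℤ)) (by omega) (by omega)
    have e1 := eq_mul_of_mul_eq hc
    have h2 : (-(k+1:ℕ):ℤ) = -(k:ℤ)-1 := by push_cast; ring
    rw [h2, e1, ih (by omega), xplus_succ, mul_left_comm, mul_comm (y (-(k:ℤ)))]

lemma telescope_num_rev {y x : ℤ → ℤˣ} {n : ℕ} {c : ℤˣ}
    (h : ∀ k ≤ n+1, x (-(k:ℤ)) = c * xplus y k) :
    ∀ i : ℤ, -(n:ℤ) ≤ i → i ≤ 0 → x (i-1) * x i = y i := by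
  intro i h1 h2
  obtain ⟨k, hk, rfl⟩ : ∃ k : ℕ, k ≤ n ∧ i = -(k:ℤ) := ⟨(-i).toNat, by omega, by omega⟩
  have e1 : x (-(k:ℤ) - 1) = c * xplus y (k+1) := by
    have := h (k+1) (by omega)
    rwa [show (-(k+1:ℕ):ℤ) = -(k:ℤ)-1 by push_cast; ring] at this
  rw [e1, h k (by omega), mul_mul_mul_comm, u_mul_self, one_mul, xplus_succ,
    mul_comm (xplus y k) (y _), mul_assoc, u_mul_self, mul_one]

lemma telescope_den {y x : ℤ → ℤˣ} {n : ℕ}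
    (h : ∀ i : ℤ, -(n:ℤ) ≤ i → i ≤ -1 → x (i-1) * x i = y i) :
    ∀ k, 1 ≤ k → k ≤ n+1 → x (-(k:ℤ)) = (x (-1) * y 0) * xplus y k := by
  intro k
  induction k with
  | zero => omega
  | succ k ih =>
    intro _ hk
    rcases Nat.eq_zero_or_pos k with rfl | hpos
    · rw [xplus_one, mul_assoc, u_mul_self, mul_one]
      norm_num
    · have hc := h (-(k:ℤ)) (by omega) (by omega)
      have e1 := eq_mul_of_mul_eq hc
      have h2 : (-(k+1:ℕ):ℤ) = -(k:ℤ)-1 := by push_cast; ring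
      rw [h2, e1, ih hpos (by omega), xplus_succ, mul_left_comm, mul_comm (y (-(k:ℤ)))]

lemma telescope_den_rev {y x : ℤ → ℤˣ} {n : ℕ} {c : ℤˣ}
    (h : ∀ k, 1 ≤ k → k ≤ n+1 → x (-(k:ℤ)) = c * xplus y k) :
    ∀ i : ℤ, -(n:ℤ) ≤ i → i ≤ -1 → x (i-1) * x i = y i := by
  intro i h1 h2
  obtain ⟨k, hk1, hk, rfl⟩ : ∃ k : ℕ, 1 ≤ k ∧ k ≤ n ∧ i = -(k:ℤ) :=
    ⟨(-i).toNat, by omega, by omega, by omega⟩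
  have e1 : x (-(k:ℤ) - 1) = c * xplus y (k+1) := by
    have := h (k+1) (by omega) (by omega)
    rwa [show (-(k+1:ℕ):ℤ) = -(k:ℤ)-1 by push_cast; ring] at this
  rw [e1, h k (by omega) (by omega), mul_mul_mul_comm, u_mul_self, one_mul, xplus_succ,
    mul_comm (xplus y k) (y _), mul_assoc, u_mul_self, mul_one]

lemma preimage_num (y : ℤ → ℤˣ) (n : ℕ) :
    pairProd ⁻¹' cylIcc (-(n:ℤ)) 0 y =
      {x : ℤ → ℤˣ | ∀ k ∈ Finset.range (n+2), x (-(k:ℤ)) = xplus y k}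
      ∪ {x : ℤ → ℤˣ | ∀ k ∈ Finset.range (n+2), x (-(k:ℤ)) = -(xplus y k)} := by
  ext x
  simp only [Set.mem_preimage, cylIcc, Set.mem_setOf_eq, Set.mem_union, Finset.mem_range]
  constructor
  · intro h
    have ht := telescope_num (y := y) (x := x) (n := n) h
    rcases Int.units_eq_one_or (x 0) with h0 | h0
    · left; intro k hk; rw [ht k (by omega), h0, one_mul]
    · right; intro k hk; rw [ht k (by omega), h0, neg_mul, one_mul]
  · rintro (h | h) i h1 h2
    · exact telescope_num_rev (c := 1) (fun k hk => by rw [h k (by omega), one_mul]) i h1 h2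
    · exact telescope_num_rev (c := -1)
        (fun k hk => by rw [h k (by omega), neg_mul, one_mul]) i h1 h2

lemma preimage_den (y : ℤ → ℤˣ) (n : ℕ) :
    pairProd ⁻¹' cylIcc (-(n:ℤ)) (-1) y =
      {x : ℤ → ℤˣ | ∀ k ∈ Finset.Icc 1 (n+1), x (-(k:ℤ)) = xplus y k}
      ∪ {x : ℤ → ℤˣ | ∀ k ∈ Finset.Icc 1 (n+1), x (-(k:ℤ)) = -(xplus y k)} := by
  ext x
  simp only [Set.mem_preimage, cylIcc, Set.mem_setOf_eq, Set.mem_union, Finset.mem_Icc]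
  constructor
  · intro h
    have ht := telescope_den (y := y) (x := x) (n := n) h
    rcases Int.units_eq_one_or (x (-1) * y 0) with h0 | h0
    · left; intro k hk; rw [ht k hk.1 hk.2, h0, one_mul]
    · right; intro k hk; rw [ht k hk.1 hk.2, h0, neg_mul, one_mul]
  · rintro (h | h) i h1 h2
    · exact telescope_den_rev (c := 1)
        (fun k hk1 hk2 => by rw [h k ⟨hk1, hk2⟩, one_mul]) i h1 h2
    · exact telescope_den_rev (c := -1)
        (fun k hk1 hk2 => by rw [h k ⟨hk1, hk2⟩, neg_mul, one_mul]) i h1 h2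

open scoped Classical

noncomputable def q (ε : ℝ) (u : ℤˣ) : ℝ := if u = -1 then ε else 1 - ε

lemma q_one (ε : ℝ) : q ε 1 = 1 - ε := by simp [q]
lemma q_neg_one (ε : ℝ) : q ε (-1) = ε := by simp [q]
lemma q_nonneg {ε : ℝ} (h0 : 0 ≤ ε) (h1 : ε ≤ 1) (u : ℤˣ) : 0 ≤ q ε u := by
  unfold q; split <;> linarith
lemma q_pos {ε : ℝ} (h0 : 0 < ε) (h1 : ε < 1) (u : ℤˣ) : 0 < q ε u := by
  unfold q; split <;> linarith

def negEmb : ℕ ↪ ℤ := ⟨fun k => -(k:ℤ), by intro a b h; exact_mod_cast neg_inj.1 h⟩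

variable {ε : ℝ} {μ : Measure (ℤ → ℤˣ)}

lemma measure_window
    (hμ : ∀ (s : Finset ℤ) (w : ℤ → ℤˣ),
      μ {x | ∀ i ∈ s, x i = w i}
        = ∏ i ∈ s, ENNReal.ofReal (if w i = -1 then ε else 1 - ε))
    (h0 : 0 ≤ ε) (h1 : ε ≤ 1) (s : Finset ℕ) (v : ℕ → ℤˣ) :
    μ {x | ∀ k ∈ s, x (-(k:ℤ)) = v k} = ENNReal.ofReal (∏ k ∈ s, q ε (v k)) := by
  have h2 := hμ (s.map negEmb) (fun i => v (-i).toNat)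
  have hset : {x : ℤ → ℤˣ | ∀ i ∈ s.map negEmb, x i = v (-i).toNat}
      = {x : ℤ → ℤˣ | ∀ k ∈ s, x (-(k:ℤ)) = v k} := by
    ext x
    simp only [Set.mem_setOf_eq, Finset.mem_map, Function.Embedding.coeFn_mk, negEmb]
    constructor
    · intro h k hk
      have := h (-(k:ℤ)) ⟨k, hk, rfl⟩
      simpa using this
    · rintro h i ⟨a, ha, rfl⟩
      show x (-(a:ℤ)) = v (-(-(a:ℤ))).toNat
      simpa using h a ha
  rw [hset] at h2
  rw [h2, Finset.prod_map, ENNReal.ofReal_prod_of_nonneg (fun k _ => q_nonneg h0 h1 _)]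
  refine Finset.prod_congr rfl fun k _ => ?_
  show ENNReal.ofReal (if v (-(-(k:ℤ))).toNat = -1 then ε else 1 - ε) = _
  simp [negEmb, q]


lemma meas_coord
    (hμ : ∀ (s : Finset ℤ) (w : ℤ → ℤˣ),
      μ {x | ∀ i ∈ s, x i = w i}
        = ∏ i ∈ s, ENNReal.ofReal (if w i = -1 then ε else 1 - ε))
    (i : ℤ) (u : ℤˣ) : μ {x | x i = u} = ENNReal.ofReal (q ε u) := by
  have := hμ {i} (fun _ => u)
  simpa [q] using this

lemma meas_coord_pair
    (hμ : ∀ (s : Finset ℤ) (w : ℤ → ℤˣ),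
      μ {x | ∀ i ∈ s, x i = w i}
        = ∏ i ∈ s, ENNReal.ofReal (if w i = -1 then ε else 1 - ε))
    {i j : ℤ} (hij : i ≠ j) (u v : ℤˣ) :
    μ ({x | x i = u} ∩ {x | x j = v}) = μ {x | x i = u} * μ {x | x j = v} := by
  have h2 := hμ {i, j} (fun m => if m = i then u else v)
  have hset : {x : ℤ → ℤˣ | ∀ m ∈ ({i, j} : Finset ℤ), x m = if m = i then u else v}
      = {x : ℤ → ℤˣ | x i = u} ∩ {x : ℤ → ℤˣ | x j = v} := by
    ext x
    constructor
    · intro h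
      refine ⟨by simpa using h i (by simp), ?_⟩
      have := h j (by simp)
      rwa [if_neg hij.symm] at this
    · rintro ⟨ha, hb⟩ m hm
      rcases Finset.mem_insert.1 hm with rfl | hm
      · simpa using ha
      · rw [Finset.mem_singleton] at hm; subst hm; rwa [if_neg hij.symm]
  rw [hset] at h2
  rw [h2, Finset.prod_pair hij, meas_coord hμ, meas_coord hμ]
  congr 1 <;> simp [q, if_neg hij.symm]


lemma compl_coord (i : ℤ) : {x : ℤ → ℤˣ | x i = -1}ᶜ = {x : ℤ → ℤˣ | x i = 1} := by
  ext x
  simp only [Set.mem_compl_iff, Set.mem_setOf_eq]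
  rcases Int.units_eq_one_or (x i) with h | h <;> simp [h]

lemma indicator_preimage {α : Type*} (A : Set α) (s : Set ℝ) :
    (A.indicator (fun _ => (1:ℝ))) ⁻¹' s =
      if (1:ℝ) ∈ s then (if (0:ℝ) ∈ s then Set.univ else A)
      else (if (0:ℝ) ∈ s then Aᶜ else ∅) := by
  split_ifs with h1 h0 h0 <;> ext x <;> by_cases hx : x ∈ A <;>
    simp [Set.indicator, hx, h1, h0]

lemma preimage_measure_eq
    (hμ : ∀ (s : Finset ℤ) (w : ℤ → ℤˣ),
      μ {x | ∀ i ∈ s, x i = w i}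
        = ∏ i ∈ s, ENNReal.ofReal (if w i = -1 then ε else 1 - ε))
    (h0 : 0 ≤ ε) (h1 : ε ≤ 1) (i : ℤ) (s : Set ℝ) :
    μ ((({x : ℤ → ℤˣ | x i = -1}).indicator (fun _ => (1:ℝ))) ⁻¹' s) =
      (if (1:ℝ) ∈ s then ENNReal.ofReal ε else 0)
        + (if (0:ℝ) ∈ s then ENNReal.ofReal (1-ε) else 0) := by
  have huniv : μ Set.univ = ENNReal.ofReal ε + ENNReal.ofReal (1-ε) := by
    have : Set.univ = {x : ℤ → ℤˣ | x i = -1} ∪ {x : ℤ → ℤˣ | x i = 1} := by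
      ext x
      rcases Int.units_eq_one_or (x i) with h | h <;> simp [h]
    rw [this, measure_union ?hd ?hm, meas_coord hμ, meas_coord hμ, q_one, q_neg_one]
    case hd =>
      rw [Set.disjoint_left]
      rintro x hx1 hx2
      rw [Set.mem_setOf_eq] at hx1 hx2
      rw [hx1] at hx2
      exact absurd hx2 (by decide)
    case hm =>
      have : {x : ℤ → ℤˣ | x i = 1} = (fun x : ℤ → ℤˣ => x i) ⁻¹' {1} := rfl
      rw [this]
      exact measurable_pi_apply i MeasurableSpace.measurableSet_top
  rw [indicator_preimage]
  split_ifs with ha hb hb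
  · rw [huniv]
  · rw [meas_coord hμ, q_neg_one, add_zero]
  · rw [compl_coord, meas_coord hμ, q_one, zero_add]
  · simp

lemma measurableSet_coord' (i : ℤ) (u : ℤˣ) : MeasurableSet {x : ℤ → ℤˣ | x i = u} := by
  have : {x : ℤ → ℤˣ | x i = u} = (fun x : ℤ → ℤˣ => x i) ⁻¹' {u} := rfl
  rw [this]
  exact measurable_pi_apply i MeasurableSpace.measurableSet_top

lemma shape_of_preimage (i : ℤ) (s : Set ℝ) :
    ((({x : ℤ → ℤˣ | x i = -1}).indicator (fun _ => (1:ℝ))) ⁻¹' s) = ∅ ∨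
    ((({x : ℤ → ℤˣ | x i = -1}).indicator (fun _ => (1:ℝ))) ⁻¹' s) = Set.univ ∨
    ∃ u : ℤˣ, ((({x : ℤ → ℤˣ | x i = -1}).indicator (fun _ => (1:ℝ))) ⁻¹' s)
      = {x : ℤ → ℤˣ | x i = u} := by
  rw [indicator_preimage]
  split_ifs
  · right; left; rfl
  · right; right; exact ⟨-1, rfl⟩
  · right; right; exact ⟨1, compl_coord i⟩
  · left; rfl

variable [IsProbabilityMeasure μ]

lemma shape_inter
    (hμ : ∀ (s : Finset ℤ) (w : ℤ → ℤˣ),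
      μ {x | ∀ i ∈ s, x i = w i}
        = ∏ i ∈ s, ENNReal.ofReal (if w i = -1 then ε else 1 - ε))
    {i j : ℤ} (hij : i ≠ j) {S T : Set (ℤ → ℤˣ)}
    (hS : S = ∅ ∨ S = Set.univ ∨ ∃ u : ℤˣ, S = {x : ℤ → ℤˣ | x i = u})
    (hT : T = ∅ ∨ T = Set.univ ∨ ∃ v : ℤˣ, T = {x : ℤ → ℤˣ | x j = v}) :
    μ (S ∩ T) = μ S * μ T := by
  rcases hS with rfl | rfl | ⟨u, rfl⟩
  · simp
  · simp
  · rcases hT with rfl | rfl | ⟨v, rfl⟩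
    · simp
    · simp
    · exact meas_coord_pair hμ hij u v

noncomputable def Xind (k : ℕ) : (ℤ → ℤˣ) → ℝ :=
  ({x : ℤ → ℤˣ | x (-(k:ℤ)-1) = -1}).indicator (fun _ => (1:ℝ))

lemma measurable_Xind (k : ℕ) : Measurable (Xind k) :=
  measurable_const.indicator (measurableSet_coord' _ _)

lemma indep_Xind
    (hμ : ∀ (s : Finset ℤ) (w : ℤ → ℤˣ),
      μ {x | ∀ i ∈ s, x i = w i}
        = ∏ i ∈ s, ENNReal.ofReal (if w i = -1 then ε else 1 - ε)) :
    Pairwise (fun k l => ProbabilityTheory.IndepFun (Xind k) (Xind l) μ) := by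
  intro k l hkl
  rw [ProbabilityTheory.indepFun_iff_measure_inter_preimage_eq_mul]
  intro s t _ _
  exact shape_inter hμ (by omega : -(k:ℤ)-1 ≠ -(l:ℤ)-1)
    (shape_of_preimage _ s) (shape_of_preimage _ t)

lemma identDistrib_Xind
    (hμ : ∀ (s : Finset ℤ) (w : ℤ → ℤˣ),
      μ {x | ∀ i ∈ s, x i = w i}
        = ∏ i ∈ s, ENNReal.ofReal (if w i = -1 then ε else 1 - ε))
    (h0 : 0 ≤ ε) (h1 : ε ≤ 1) (k : ℕ) :
    ProbabilityTheory.IdentDistrib (Xind k) (Xind 0) μ μ := by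
  refine ⟨(measurable_Xind k).aemeasurable, (measurable_Xind 0).aemeasurable, ?_⟩
  refine Measure.ext fun s hs => ?_
  rw [Measure.map_apply (measurable_Xind k) hs, Measure.map_apply (measurable_Xind 0) hs]
  rw [Xind, Xind, preimage_measure_eq hμ h0 h1, preimage_measure_eq hμ h0 h1]

lemma integrable_Xind (k : ℕ) : Integrable (Xind k) μ :=
  (integrable_const (1:ℝ)).indicator (measurableSet_coord' _ _)

lemma integral_Xind (hμ : ∀ (s : Finset ℤ) (w : ℤ → ℤˣ),
      μ {x | ∀ i ∈ s, x i = w i}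
        = ∏ i ∈ s, ENNReal.ofReal (if w i = -1 then ε else 1 - ε))
    (h0 : 0 ≤ ε) : ∫ x, Xind 0 x ∂μ = ε := by
  rw [Xind]
  rw [integral_indicator_const (1:ℝ) (measurableSet_coord' _ _)]
  rw [measureReal_def, meas_coord hμ, q_neg_one, smul_eq_mul, mul_one, ENNReal.toReal_ofReal h0]

lemma slln
    (hμ : ∀ (s : Finset ℤ) (w : ℤ → ℤˣ),
      μ {x | ∀ i ∈ s, x i = w i}
        = ∏ i ∈ s, ENNReal.ofReal (if w i = -1 then ε else 1 - ε))
    (h0 : 0 ≤ ε) (h1 : ε ≤ 1) :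
    ∀ᵐ x ∂μ, Tendsto (fun n : ℕ =>
      (((Finset.range n).filter (fun i : ℕ => x (-(i:ℤ)-1) = -1)).card : ℝ) / n)
      atTop (𝓝 ε) := by
  have h := ProbabilityTheory.strong_law_ae Xind (integrable_Xind 0)
    (indep_Xind hμ) (identDistrib_Xind hμ h0 h1)
  rw [integral_Xind hμ h0] at h
  refine h.mono fun x hx => ?_
  refine hx.congr fun n => ?_
  have e1 : ∀ i : ℕ, Xind i x = if x (-(i:ℤ)-1) = -1 then (1:ℝ) else 0 := fun i => by
    simp [Xind, Set.indicator_apply]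
  have : ∑ i ∈ Finset.range n, Xind i x
      = (((Finset.range n).filter (fun i : ℕ => x (-(i:ℤ)-1) = -1)).card : ℝ) := by
    rw [Finset.sum_congr rfl (fun i _ => e1 i)]
    exact Finset.sum_boole _ _
  rw [this, smul_eq_mul, inv_mul_eq_div]







lemma count_pow_tendsto_zero {ε : ℝ} (hε0 : 0 < ε) (hε1 : ε < 1) (hεh : ε ≠ 1/2)
    (m : ℕ → ℕ) (hm : ∀ n, m n ≤ n+1)
    (hd : Tendsto (fun n : ℕ => (m n : ℝ)/((n:ℝ)+1)) atTop (𝓝 ε)) :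
    Tendsto (fun n : ℕ => ((1-ε)/ε)^(m n) * (ε/(1-ε))^((n+1) - m n)) atTop (𝓝 0) := by
  have hr : 0 < (1-ε)/ε := div_pos (by linarith) hε0
  have hr' : 0 < ε/(1-ε) := div_pos hε0 (by linarith)
  set L := Real.log ((1-ε)/ε) with hLdef
  have hL : (2*ε-1) * L < 0 := by
    rcases lt_or_gt_of_ne hεh with h | h
    · have h2 : 1 < (1-ε)/ε := (one_lt_div hε0).2 (by linarith)
      exact mul_neg_of_neg_of_pos (by linarith) (Real.log_pos h2)
    · have h2 : (1-ε)/ε < 1 := (div_lt_one hε0).2 (by linarith)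
      exact mul_neg_of_pos_of_neg (by linarith) (Real.log_neg hr h2)
  have hglog : ∀ n : ℕ, Real.log (((1-ε)/ε)^(m n) * (ε/(1-ε))^((n+1) - m n))
      = ((n:ℝ)+1) * ((2*((m n:ℝ)/((n:ℝ)+1)) - 1) * L) := by
    intro n
    rw [Real.log_mul (pow_ne_zero _ hr.ne') (pow_ne_zero _ hr'.ne'),
      Real.log_pow, Real.log_pow]
    have hinv : Real.log (ε/(1-ε)) = -L := by
      rw [hLdef, ← Real.log_inv]; congr 1; rw [inv_div]
    rw [hinv, Nat.cast_sub (hm n)]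
    have hn : ((n:ℝ)+1) ≠ 0 := by positivity
    push_cast
    field_simp
    ring
  have hc : Tendsto (fun n : ℕ => (2*((m n:ℝ)/((n:ℝ)+1)) - 1) * L) atTop
      (𝓝 ((2*ε-1)*L)) := ((hd.const_mul 2).sub_const 1).mul_const L
  have hn1 : Tendsto (fun n : ℕ => (n:ℝ)+1) atTop atTop :=
    tendsto_atTop_add_const_right _ 1 tendsto_natCast_atTop_atTop
  have hlog := hn1.atTop_mul_neg hL hc
  have hexp := Real.tendsto_exp_atBot.comp hlog
  refine hexp.congr fun n => ?_
  rw [Function.comp_apply, ← hglog n, Real.exp_log (by positivity)]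

lemma ratio_lim_gen {ε : ℝ} (a b : ℝ) (P Q : ℕ → ℝ) (hP : ∀ n, 0 < P n) (hQ : ∀ n, 0 < Q n)
    (hg : Tendsto (fun n => Q n / P n) atTop (𝓝 0)) :
    Tendsto (fun n => (a * P n + b * Q n)/(P n + Q n)) atTop (𝓝 a) := by
  have h1 : Tendsto (fun n => (a + b * (Q n / P n))/(1 + Q n / P n)) atTop (𝓝 a) := by
    have := Tendsto.div ((tendsto_const_nhds (x := a)).add (hg.const_mul b))
      ((tendsto_const_nhds (x := (1:ℝ))).add hg) (by norm_num)
    rw [show (a + b * 0) / (1 + 0) = a by simp] at this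
    exact this
  refine h1.congr fun n => ?_
  have hPn : P n ≠ 0 := (hP n).ne'
  have hPQ : P n + Q n ≠ 0 := by have := hP n; have := hQ n; positivity
  field_simp

noncomputable def Pseq (ε : ℝ) (y : ℤ → ℤˣ) (n : ℕ) : ℝ :=
  ∏ k ∈ Finset.Icc 1 (n+1), q ε (xplus y k)
noncomputable def Qseq (ε : ℝ) (y : ℤ → ℤˣ) (n : ℕ) : ℝ :=
  ∏ k ∈ Finset.Icc 1 (n+1), q ε (-(xplus y k))

def cntm (y : ℤ → ℤˣ) (n : ℕ) : ℕ :=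
  ((Finset.Icc 1 (n+1)).filter (fun k => xplus y k = -1)).card
def cntp (y : ℤ → ℤˣ) (n : ℕ) : ℕ :=
  ((Finset.Icc 1 (n+1)).filter (fun k => xplus y k = 1)).card

lemma cnt_sum (y : ℤ → ℤˣ) (n : ℕ) : cntm y n + cntp y n = n+1 := by
  have hf : (Finset.Icc 1 (n+1)).filter (fun k => ¬ (xplus y k = -1))
      = (Finset.Icc 1 (n+1)).filter (fun k => xplus y k = 1) := by
    refine Finset.filter_congr fun k _ => ?_
    rcases Int.units_eq_one_or (xplus y k) with h | h <;> simp [h]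
  have := Finset.card_filter_add_card_filter_not
    (s := Finset.Icc 1 (n+1)) (fun k => xplus y k = -1)
  rw [hf] at this
  simpa [cntm, cntp, Nat.card_Icc] using this

lemma cntm_le (y : ℤ → ℤˣ) (n : ℕ) : cntm y n ≤ n+1 := by
  have := cnt_sum y n; omega
lemma cntp_le (y : ℤ → ℤˣ) (n : ℕ) : cntp y n ≤ n+1 := by
  have := cnt_sum y n; omega

lemma Pseq_pos {ε : ℝ} (h0 : 0 < ε) (h1 : ε < 1) (y : ℤ → ℤˣ) (n : ℕ) : 0 < Pseq ε y n :=
  Finset.prod_pos fun k _ => q_pos h0 h1 _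
lemma Qseq_pos {ε : ℝ} (h0 : 0 < ε) (h1 : ε < 1) (y : ℤ → ℤˣ) (n : ℕ) : 0 < Qseq ε y n :=
  Finset.prod_pos fun k _ => q_pos h0 h1 _

lemma Pseq_eq (ε : ℝ) (y : ℤ → ℤˣ) (n : ℕ) :
    Pseq ε y n = ε ^ (cntm y n) * (1-ε) ^ (cntp y n) := by
  rw [Pseq, ← Finset.prod_filter_mul_prod_filter_not (Finset.Icc 1 (n+1))
    (fun k => xplus y k = -1)]
  congr 1
  · exact Finset.prod_eq_pow_card (fun k hk => by
      rw [(Finset.mem_filter.1 hk).2, q_neg_one]) ..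
  · have hf : (Finset.Icc 1 (n+1)).filter (fun k => ¬ (xplus y k = -1))
        = (Finset.Icc 1 (n+1)).filter (fun k => xplus y k = 1) := by
      refine Finset.filter_congr fun k _ => ?_
      rcases Int.units_eq_one_or (xplus y k) with h | h <;> simp [h]
    rw [hf]
    exact Finset.prod_eq_pow_card (fun k hk => by
      rw [(Finset.mem_filter.1 hk).2, q_one]) ..

lemma Qseq_eq (ε : ℝ) (y : ℤ → ℤˣ) (n : ℕ) :
    Qseq ε y n = (1-ε) ^ (cntm y n) * ε ^ (cntp y n) := by
  rw [Qseq, ← Finset.prod_filter_mul_prod_filter_not (Finset.Icc 1 (n+1))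
    (fun k => xplus y k = -1)]
  congr 1
  · exact Finset.prod_eq_pow_card (fun k hk => by
      rw [(Finset.mem_filter.1 hk).2]; norm_num [q_one]) ..
  · have hf : (Finset.Icc 1 (n+1)).filter (fun k => ¬ (xplus y k = -1))
        = (Finset.Icc 1 (n+1)).filter (fun k => xplus y k = 1) := by
      refine Finset.filter_congr fun k _ => ?_
      rcases Int.units_eq_one_or (xplus y k) with h | h <;> simp [h]
    rw [hf]
    exact Finset.prod_eq_pow_card (fun k hk => by
      rw [(Finset.mem_filter.1 hk).2, q_neg_one]) ..

lemma QdivP {ε : ℝ} (h0 : 0 < ε) (h1 : ε < 1) (y : ℤ → ℤˣ) (n : ℕ) :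
    Qseq ε y n / Pseq ε y n = ((1-ε)/ε)^(cntm y n) * (ε/(1-ε))^(cntp y n) := by
  rw [Pseq_eq, Qseq_eq, div_pow, div_pow]
  have : (0:ℝ) < 1 - ε := by linarith
  field_simp
  try ring

lemma PdivQ {ε : ℝ} (h0 : 0 < ε) (h1 : ε < 1) (y : ℤ → ℤˣ) (n : ℕ) :
    Pseq ε y n / Qseq ε y n = ((1-ε)/ε)^(cntp y n) * (ε/(1-ε))^(cntm y n) := by
  rw [Pseq_eq, Qseq_eq, div_pow, div_pow]
  have : (0:ℝ) < 1 - ε := by linarith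
  field_simp
  try ring

lemma unit_mul_eq_iff (a b c : ℤˣ) : a * b = c ↔ b = a * c := by
  constructor
  · rintro rfl; rw [← mul_assoc, u_mul_self, one_mul]
  · rintro rfl; rw [← mul_assoc, u_mul_self, one_mul]

omit [IsProbabilityMeasure μ] in
lemma measure_cyl_num
    (hμ : ∀ (s : Finset ℤ) (w : ℤ → ℤˣ),
      μ {x | ∀ i ∈ s, x i = w i}
        = ∏ i ∈ s, ENNReal.ofReal (if w i = -1 then ε else 1 - ε))
    (h0 : 0 ≤ ε) (h1 : ε ≤ 1) (y : ℤ → ℤˣ) (n : ℕ) :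
    (μ.map pairProd) (cylIcc (-(n:ℤ)) 0 y)
      = ENNReal.ofReal (∏ k ∈ Finset.range (n+2), q ε (xplus y k))
        + ENNReal.ofReal (∏ k ∈ Finset.range (n+2), q ε (-(xplus y k))) := by
  rw [Measure.map_apply measurable_pairProd (measurableSet_cylIcc _ _ _), preimage_num]
  rw [measure_union ?hd (measurableSet_window _ _),
    measure_window hμ h0 h1, measure_window hμ h0 h1]
  case hd =>
    rw [Set.disjoint_left]
    intro x hx1 hx2
    have a := hx1 0 (Finset.mem_range.2 (by omega))
    have b := hx2 0 (Finset.mem_range.2 (by omega))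
    rw [xplus_zero] at a b
    rw [a] at b
    exact absurd b (by decide)

omit [IsProbabilityMeasure μ] in
lemma measure_cyl_den
    (hμ : ∀ (s : Finset ℤ) (w : ℤ → ℤˣ),
      μ {x | ∀ i ∈ s, x i = w i}
        = ∏ i ∈ s, ENNReal.ofReal (if w i = -1 then ε else 1 - ε))
    (h0 : 0 ≤ ε) (h1 : ε ≤ 1) (y : ℤ → ℤˣ) (n : ℕ) :
    (μ.map pairProd) (cylIcc (-(n:ℤ)) (-1) y)
      = ENNReal.ofReal (∏ k ∈ Finset.Icc 1 (n+1), q ε (xplus y k))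
        + ENNReal.ofReal (∏ k ∈ Finset.Icc 1 (n+1), q ε (-(xplus y k))) := by
  rw [Measure.map_apply measurable_pairProd (measurableSet_cylIcc _ _ _), preimage_den]
  rw [measure_union ?hd (measurableSet_window _ _),
    measure_window hμ h0 h1, measure_window hμ h0 h1]
  case hd =>
    rw [Set.disjoint_left]
    intro x hx1 hx2
    have a := hx1 1 (Finset.mem_Icc.2 ⟨le_refl 1, by omega⟩)
    have b := hx2 1 (Finset.mem_Icc.2 ⟨le_refl 1, by omega⟩)
    rw [a] at b
    exact units_ne_neg _ b

lemma prod_split_plus (ε : ℝ) (y : ℤ → ℤˣ) (n : ℕ) :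
    ∏ k ∈ Finset.range (n+2), q ε (xplus y k) = (1-ε) * Pseq ε y n := by
  have h : Finset.range (n+2) = insert 0 (Finset.Icc 1 (n+1)) := by
    ext k; simp; omega
  rw [h, Finset.prod_insert (by simp), xplus_zero, q_one]
  rfl

lemma prod_split_minus (ε : ℝ) (y : ℤ → ℤˣ) (n : ℕ) :
    ∏ k ∈ Finset.range (n+2), q ε (-(xplus y k)) = ε * Qseq ε y n := by
  have h : Finset.range (n+2) = insert 0 (Finset.Icc 1 (n+1)) := by
    ext k; simp; omega
  rw [h, Finset.prod_insert (by simp), xplus_zero,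
    show -(1:ℤˣ) = (-1:ℤˣ) from rfl, q_neg_one]
  rfl

omit [IsProbabilityMeasure μ] in
lemma ratio_eq
    (hμ : ∀ (s : Finset ℤ) (w : ℤ → ℤˣ),
      μ {x | ∀ i ∈ s, x i = w i}
        = ∏ i ∈ s, ENNReal.ofReal (if w i = -1 then ε else 1 - ε))
    (h0 : 0 < ε) (h1 : ε < 1) (y : ℤ → ℤˣ) (n : ℕ) :
    ((μ.map pairProd) (cylIcc (-(n:ℤ)) 0 y)).toReal
        / ((μ.map pairProd) (cylIcc (-(n:ℤ)) (-1) y)).toReal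
      = ((1-ε) * Pseq ε y n + ε * Qseq ε y n) / (Pseq ε y n + Qseq ε y n) := by
  have hnn : ∀ (f : ℕ → ℤˣ) (s : Finset ℕ), 0 ≤ ∏ k ∈ s, q ε (f k) :=
    fun f s => Finset.prod_nonneg fun k _ => q_nonneg h0.le h1.le _
  rw [measure_cyl_num hμ h0.le h1.le, measure_cyl_den hμ h0.le h1.le,
    ENNReal.toReal_add ENNReal.ofReal_ne_top ENNReal.ofReal_ne_top,
    ENNReal.toReal_add ENNReal.ofReal_ne_top ENNReal.ofReal_ne_top,
    ENNReal.toReal_ofReal (hnn _ _), ENNReal.toReal_ofReal (hnn _ _),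
    ENNReal.toReal_ofReal (hnn _ _), ENNReal.toReal_ofReal (hnn _ _),
    prod_split_plus, prod_split_minus]
  rfl

omit [IsProbabilityMeasure μ] in
lemma part2plus
    (hε0 : 0 < ε) (hε1 : ε < 1) (hεhalf : ε ≠ 1/2)
    (hμ : ∀ (s : Finset ℤ) (w : ℤ → ℤˣ),
      μ {x | ∀ i ∈ s, x i = w i}
        = ∏ i ∈ s, ENNReal.ofReal (if w i = -1 then ε else 1 - ε))
    (y : ℤ → ℤˣ) (hd : densPlus y ε) :
    Tendsto (fun n : ℕ => ((μ.map pairProd) (cylIcc (-(n:ℤ)) 0 y)).toReal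
      / ((μ.map pairProd) (cylIcc (-(n:ℤ)) (-1) y)).toReal) atTop (𝓝 (1-ε)) := by
  have hm : Tendsto (fun n : ℕ => (cntm y n : ℝ)/((n:ℝ)+1)) atTop (𝓝 ε) := by
    have h := hd.comp (tendsto_add_atTop_nat 1)
    refine h.congr fun n => ?_
    simp only [Function.comp_apply, cntm]
    push_cast
    rfl
  have h0 := count_pow_tendsto_zero hε0 hε1 hεhalf (cntm y) (cntm_le y) hm
  have hg : Tendsto (fun n => Qseq ε y n / Pseq ε y n) atTop (𝓝 0) := by
    refine Tendsto.congr (fun n => ?_) h0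
    rw [QdivP hε0 hε1, show (n+1) - cntm y n = cntp y n from by have := cnt_sum y n; omega]
  have hlim := ratio_lim_gen (ε := ε) (1-ε) ε (Pseq ε y) (Qseq ε y)
    (Pseq_pos hε0 hε1 y) (Qseq_pos hε0 hε1 y) hg
  exact hlim.congr fun n => (ratio_eq hμ hε0 hε1 y n).symm

omit [IsProbabilityMeasure μ] in
lemma part2minus
    (hε0 : 0 < ε) (hε1 : ε < 1) (hεhalf : ε ≠ 1/2)
    (hμ : ∀ (s : Finset ℤ) (w : ℤ → ℤˣ),
      μ {x | ∀ i ∈ s, x i = w i}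
        = ∏ i ∈ s, ENNReal.ofReal (if w i = -1 then ε else 1 - ε))
    (y : ℤ → ℤˣ) (hd : densMinus y ε) :
    Tendsto (fun n : ℕ => ((μ.map pairProd) (cylIcc (-(n:ℤ)) 0 y)).toReal
      / ((μ.map pairProd) (cylIcc (-(n:ℤ)) (-1) y)).toReal) atTop (𝓝 ε) := by
  have hm : Tendsto (fun n : ℕ => (cntp y n : ℝ)/((n:ℝ)+1)) atTop (𝓝 ε) := by
    have h := hd.comp (tendsto_add_atTop_nat 1)
    refine h.congr fun n => ?_
    simp only [Function.comp_apply, cntp]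
    push_cast
    rfl
  have h0 := count_pow_tendsto_zero hε0 hε1 hεhalf (cntp y) (cntp_le y) hm
  have hg : Tendsto (fun n => Pseq ε y n / Qseq ε y n) atTop (𝓝 0) := by
    refine Tendsto.congr (fun n => ?_) h0
    rw [PdivQ hε0 hε1, show (n+1) - cntp y n = cntm y n from by have := cnt_sum y n; omega]
  have hlim := ratio_lim_gen (ε := ε) ε (1-ε) (Qseq ε y) (Pseq ε y)
    (Qseq_pos hε0 hε1 y) (Pseq_pos hε0 hε1 y) hg
  refine hlim.congr fun n => ?_
  rw [ratio_eq hμ hε0 hε1 y n, add_comm (ε * Qseq ε y n), add_comm (Qseq ε y n)]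

lemma part1
    (hε0 : 0 < ε) (hε1 : ε < 1)
    (hμ : ∀ (s : Finset ℤ) (w : ℤ → ℤˣ),
      μ {x | ∀ i ∈ s, x i = w i}
        = ∏ i ∈ s, ENNReal.ofReal (if w i = -1 then ε else 1 - ε)) :
    (μ.map pairProd) {y | densPlus y ε ∨ densMinus y ε} = 1 := by
  have hae := slln hμ hε0.le hε1.le
  have hsub : ∀ x : ℤ → ℤˣ, Tendsto (fun n : ℕ =>
        (((Finset.range n).filter (fun i : ℕ => x (-(i:ℤ)-1) = -1)).card : ℝ) / n)
        atTop (𝓝 ε) →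
      (densPlus (pairProd x) ε ∨ densMinus (pairProd x) ε) := by
    intro x hx
    have key : ∀ (v : ℤˣ), x 0 * v = -1 → ∀ n : ℕ,
        ((Finset.Icc 1 n).filter (fun k => xplus (pairProd x) k = v)).card
          = ((Finset.range n).filter (fun i : ℕ => x (-(i:ℤ)-1) = -1)).card := by
      intro v hv n
      have hpred : ∀ k : ℕ, (xplus (pairProd x) k = v) ↔ (x (-(k:ℤ)) = -1) := by
        intro k
        rw [xplus_pairProd, unit_mul_eq_iff, hv]
      have hIcc : Finset.Icc 1 n
          = (Finset.range n).map ⟨fun i => i+1, add_left_injective 1⟩ := by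
        ext k
        simp only [Finset.mem_Icc, Finset.mem_map, Finset.mem_range,
          Function.Embedding.coeFn_mk]
        constructor
        · rintro ⟨h1, h2⟩; exact ⟨k-1, by omega, by omega⟩
        · rintro ⟨a, ha, rfl⟩; omega
      rw [Finset.filter_congr (fun k _ => hpred k), hIcc, Finset.filter_map,
        Finset.card_map]
      refine congrArg Finset.card (Finset.filter_congr fun i _ => ?_)
      simp only [Function.comp_apply, Function.Embedding.coeFn_mk]
      rw [show (-((i+1:ℕ):ℤ)) = -(i:ℤ)-1 from by push_cast; ring]
    rcases Int.units_eq_one_or (x 0) with h0 | h0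
    · left
      refine hx.congr fun n => ?_
      rw [← key (-1) (by rw [h0, one_mul]) n]
    · right
      refine hx.congr fun n => ?_
      rw [← key 1 (by rw [h0, mul_one]) n]
  have hae2 : ∀ᵐ x ∂μ, pairProd x ∈ {y | densPlus y ε ∨ densMinus y ε} :=
    hae.mono fun x hx => hsub x hx
  have hnull : μ {x | pairProd x ∉ {y | densPlus y ε ∨ densMinus y ε}} = 0 := by
    simpa [ae_iff] using hae2
  have hpre : (1:ENNReal) ≤ μ (pairProd ⁻¹' {y | densPlus y ε ∨ densMinus y ε}) := by
    have h2 : μ Set.univ ≤ μ (pairProd ⁻¹' {y | densPlus y ε ∨ densMinus y ε})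
        + μ ((pairProd ⁻¹' {y | densPlus y ε ∨ densMinus y ε})ᶜ) := by
      rw [← Set.union_compl_self (pairProd ⁻¹' {y | densPlus y ε ∨ densMinus y ε})]
      exact measure_union_le _ _
    have h3 : μ ((pairProd ⁻¹' {y | densPlus y ε ∨ densMinus y ε})ᶜ) = 0 := hnull
    rw [measure_univ, h3, add_zero] at h2
    exact h2
  have hfin : IsProbabilityMeasure (μ.map pairProd) :=
    Measure.isProbabilityMeasure_map measurable_pairProd.aemeasurable
  refine le_antisymm prob_le_one ?_
  exact le_trans hpre
    (Measure.le_map_apply measurable_pairProd.aemeasurable _)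

end Furst
end

/-- In Furstenberg's example, the set `G` of configurations one of whose two
`F`-preimages has density `ε` of `−1`'s has full `ν`-measure, and for `ν`-a.e. `y`
with `y_0 = +1` the conditional probabilities `ν(y_0 | y_{-n}^{-1})` converge to
`1 − ε` if `x⁺(y)` has density `ε`, and to `ε` if `x⁻(y)` has density `ε`. -/

theorem furstenberg_conditional_limits
    (ε : ℝ) (hε0 : 0 < ε) (hε1 : ε < 1) (hεhalf : ε ≠ 1 / 2)
    (μ : Measure (ℤ → ℤˣ)) [IsProbabilityMeasure μ]
    (hμ : ∀ (s : Finset ℤ) (w : ℤ → ℤˣ),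
      μ {x | ∀ i ∈ s, x i = w i}
        = ∏ i ∈ s, ENNReal.ofReal (if w i = -1 then ε else 1 - ε)) :
    (μ.map pairProd) {y | densPlus y ε ∨ densMinus y ε} = 1 ∧
    ∀ᵐ y ∂(μ.map pairProd), y 0 = 1 →
      (densPlus y ε →
        Tendsto (fun n : ℕ =>
            ((μ.map pairProd) (cylIcc (-(n : ℤ)) 0 y)).toReal
              / ((μ.map pairProd) (cylIcc (-(n : ℤ)) (-1) y)).toReal)
          atTop (𝓝 (1 - ε))) ∧
      (densMinus y ε →
        Tendsto (fun n : ℕ =>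
            ((μ.map pairProd) (cylIcc (-(n : ℤ)) 0 y)).toReal
              / ((μ.map pairProd) (cylIcc (-(n : ℤ)) (-1) y)).toReal)
          atTop (𝓝 ε)) := by
  constructor
  · exact Furst.part1 hε0 hε1 hμ
  · refine Filter.Eventually.of_forall fun y _ => ?_
    exact ⟨fun hd => Furst.part2plus hε0 hε1 hεhalf hμ y hd,
      fun hd => Furst.part2minus hε0 hε1 hεhalf hμ y hd⟩
end
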